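/- arXiv:2001.01663 — 15 statements merged into one kernel-verified Lean document; each statement's English description precedes it below -/
import Mathlib

section
/- A free filter F on ℕ is a weak P⁺-filter if and only if for every function Γ : ℕ → ℕ, either Γ is bounded on some F-stationary set, or every F-stationary set I has an F-stationary subset on which Γ is finite-to-one. -/
/-!
For `⇒`, apply the weak P⁺ property to the superlevel sets `{n | k < Γ n}`: if one of them is
not in `F`, its complement is a stationary set on which `Γ ≤ k`; otherwise the resulting `B` is
almost contained in every superlevel set, so `Γ` is finite-to-one on `B`.

For `⇐`, given a decreasing sequence `A` in `F`, let `Γ n` be the first `k` with `n ∉ A k`.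
`Γ ≤ C` on a stationary `S` would make `S ∩ A C` finite, impossible for a free filter, so `Γ` is
finite-to-one on some stationary `B ⊆ I`, and `B \ A k` lies in the finitely many fibres of
`Γ` over `0, …, k`.
-/

/-- A set is `F`-stationary if its complement is not in `F`. -/
def FStat (F : Filter ℕ) (A : Set ℕ) : Prop := Aᶜ ∉ F

/-- `F` is a weak P⁺-filter. -/
def WeakPPlus (F : Filter ℕ) : Prop :=
  ∀ A : ℕ → Set ℕ, (∀ k, A k ∈ F) → Antitone A →
    ∀ I : Set ℕ, FStat F I →
      ∃ B ⊆ I, FStat F B ∧ ∀ k, (B \ A k).Finite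

open Filter Set

/-- The first index `k` with `n ∉ A k`, and `n` itself if there is none (so that `exitTime A`
is still finite-to-one on `⋂ k, A k`). -/
noncomputable def exitTime (A : ℕ → Set ℕ) (n : ℕ) : ℕ :=
  open Classical in if h : ∃ k, n ∉ A k then Nat.find h else n

lemma exitTime_le_of_notMem {A : ℕ → Set ℕ} {n k : ℕ} (hn : n ∉ A k) : exitTime A n ≤ k := by
  classical
  have h : ∃ k, n ∉ A k := ⟨k, hn⟩
  rw [exitTime, dif_pos h]
  exact Nat.find_le hn

lemma le_of_exitTime_le_of_mem {A : ℕ → Set ℕ} (hA : Antitone A) {n C : ℕ} (hn : n ∈ A C)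
    (hC : exitTime A n ≤ C) : n ≤ C := by
  classical
  by_cases h : ∃ k, n ∉ A k
  · rw [exitTime, dif_pos h] at hC
    exact absurd (hA hC hn) (Nat.find_spec h)
  · simpa [exitTime, h] using hC

lemma FStat.infinite_inter_of_mem {F : Filter ℕ} (hfree : F ≤ cofinite) {S A : Set ℕ}
    (hS : FStat F S) (hA : A ∈ F) : (S ∩ A).Infinite := fun hfin =>
  hS <| by
    filter_upwards [hfree hfin.compl_mem_cofinite, hA] with _ hn hnA hnS using hn ⟨hnS, hnA⟩

lemma not_bounded_exitTime {F : Filter ℕ} (hfree : F ≤ cofinite) {A : ℕ → Set ℕ}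
    (hA : ∀ k, A k ∈ F) (hanti : Antitone A) {S : Set ℕ} (hS : FStat F S) (C : ℕ) :
    ¬ ∀ n ∈ S, exitTime A n ≤ C := fun hC =>
  hS.infinite_inter_of_mem hfree (hA C) <|
    (finite_Iic C).subset fun n hn => le_of_exitTime_le_of_mem hanti hn.2 (hC n hn.1)

lemma finite_sep_le_of_finite_fibers {Γ : ℕ → ℕ} {B : Set ℕ}
    (hB : ∀ m, {n ∈ B | Γ n = m}.Finite) (k : ℕ) : {n ∈ B | Γ n ≤ k}.Finite :=
  ((finite_Iic k).biUnion fun m _ => hB m).subset fun _ hn => mem_biUnion hn.2 ⟨hn.1, rfl⟩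

theorem WeakPPlus.bounded_or_finiteToOne {F : Filter ℕ} (hW : WeakPPlus F) (Γ : ℕ → ℕ) :
    (∃ S : Set ℕ, FStat F S ∧ ∃ C, ∀ n ∈ S, Γ n ≤ C) ∨
      (∀ I : Set ℕ, FStat F I →
        ∃ B ⊆ I, FStat F B ∧ ∀ m, {n ∈ B | Γ n = m}.Finite) := by
  by_cases h : ∃ k, {n | k < Γ n} ∉ F
  · obtain ⟨k, hk⟩ := h
    refine .inl ⟨{n | Γ n ≤ k}, ?_, k, fun n hn => hn⟩
    simpa [FStat, compl_ofPred] using hk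
  · push Not at h
    refine .inr fun I hI => ?_
    obtain ⟨B, hBI, hB, hfin⟩ :=
      hW (fun k => {n | k < Γ n}) h (fun _ _ hkl _ hn => hkl.trans_lt hn) I hI
    exact ⟨B, hBI, hB, fun m => (hfin m).subset fun n hn => ⟨hn.1, by simp [hn.2]⟩⟩

theorem stmt_0_general (F : Filter ℕ) (hfree : F ≤ Filter.cofinite) :
    WeakPPlus F ↔
      ∀ Γ : ℕ → ℕ,
        (∃ S : Set ℕ, FStat F S ∧ ∃ C, ∀ n ∈ S, Γ n ≤ C) ∨
        (∀ I : Set ℕ, FStat F I →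
          ∃ B ⊆ I, FStat F B ∧ ∀ m, {n ∈ B | Γ n = m}.Finite) := by
  refine ⟨WeakPPlus.bounded_or_finiteToOne, fun h A hA hanti I hI => ?_⟩
  rcases h (exitTime A) with ⟨S, hS, C, hC⟩ | hfinToOne
  · exact absurd hC (not_bounded_exitTime hfree hA hanti hS C)
  · obtain ⟨B, hBI, hB, hfin⟩ := hfinToOne I hI
    exact ⟨B, hBI, hB, fun k => (finite_sep_le_of_finite_fibers hfin k).subset
      fun n hn => ⟨hn.1, exitTime_le_of_notMem hn.2⟩⟩

theorem stmt_0 (F : Filter ℕ) (hfree : F ≤ Filter.cofinite) [F.NeBot] :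
    WeakPPlus F ↔
      ∀ Γ : ℕ → ℕ,
        (∃ S : Set ℕ, FStat F S ∧ ∃ C, ∀ n ∈ S, Γ n ≤ C) ∨
        (∀ I : Set ℕ, FStat F I →
          ∃ B ⊆ I, FStat F B ∧ ∀ m, {n ∈ B | Γ n = m}.Finite) :=
  stmt_0_general F hfree
end

section
/- A free filter F on ℕ is rapid⁺ if and only if no F-stationary set I ⊆ ℕ admits an increasing interval-partition (I_n) with respect to which F is slow. -/
/-- `F` is rapid⁺: every stationary set `I` contains, for every strictly increasing
`f`, a stationary subset whose enumerating function dominates `f`. -/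
def RapidPlus (F : Filter ℕ) : Prop :=
  ∀ I : Set ℕ, FStat F I → ∀ f : ℕ → ℕ, StrictMono f →
    ∃ B ⊆ I, FStat F B ∧ ∀ n, f n ≤ Nat.nth (· ∈ B) n

/-- `(J n)` is an increasing interval-partition of `I`. -/
def IncIntervalPartition (I : Set ℕ) (J : ℕ → Set ℕ) : Prop :=
  (∀ n, (J n).Nonempty) ∧
  (∀ n, ∃ a b : ℕ, J n = I ∩ Set.Ico a b) ∧
  (⋃ n, J n) = I ∧
  (∀ n m, n < m → ∀ x ∈ J n, ∀ y ∈ J m, x < y)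

/-- `F` is slow with respect to the increasing interval-partition `(J n)` of `I`. -/
def SlowWrt (F : Filter ℕ) (I : Set ℕ) (J : ℕ → Set ℕ) : Prop :=
  ∀ A ⊆ I, FStat F A → ∃ n, n < (A ∩ J n).ncard

/-! If `F` is rapid⁺ and `(J n)` is an increasing interval-partition of a stationary `I`, apply
rapidity to `f n = max (J n) + 1`: the resulting stationary `B ⊆ I` has its `n`-th element beyond
`J n`, so `|B ∩ J n| ≤ n` for every `n` and `F` is not slow.

Conversely, if `I` and `f` witness the failure of rapid⁺, cut `I` at points `0 = a 0 < a 1 < ⋯`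
with `f ((m + 1)²) < a (m + 1)`. A stationary `A ⊆ I` meeting every block `[a m, a (m + 1))` in at
most `m` points has at most `m²` points below `a (m + 1)`, so its `n`-th element is at least
`a (√n + 1) > f n`, contradicting the choice of `I` and `f`. -/

open Set

lemma FStat.infinite {F : Filter ℕ} (hfree : F ≤ Filter.cofinite) {A : Set ℕ}
    (hA : FStat F A) : A.Infinite :=
  fun hfin => hA (hfree (by simpa [Filter.mem_cofinite] using hfin))

lemma ncard_inter_Iio_eq_count (A : Set ℕ) [DecidablePred (· ∈ A)] (x : ℕ) :
    (A ∩ Iio x).ncard = Nat.count (· ∈ A) x := by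
  rw [Nat.count_eq_card_filter_range, ← ncard_coe_finset]
  congr 1
  ext y
  simp [and_comm]

lemma ncard_inter_Iio_nth {A : Set ℕ} (hA : A.Infinite) (n : ℕ) :
    (A ∩ Iio (Nat.nth (· ∈ A) n)).ncard = n := by
  classical
  rw [ncard_inter_Iio_eq_count, Nat.count_nth_of_infinite (p := (· ∈ A)) hA]

lemma le_nth_iff_ncard_inter_Iio_le {A : Set ℕ} (hA : A.Infinite) {x n : ℕ} :
    x ≤ Nat.nth (· ∈ A) n ↔ (A ∩ Iio x).ncard ≤ n := by
  classical
  rw [ncard_inter_Iio_eq_count, Nat.count_le_iff_le_nth (p := (· ∈ A)) hA]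

lemma IncIntervalPartition.finite {I : Set ℕ} {J : ℕ → Set ℕ}
    (hJ : IncIntervalPartition I J) (n : ℕ) : (J n).Finite := by
  obtain ⟨a, b, hab⟩ := hJ.2.1 n
  exact (finite_Ico a b).subset (hab ▸ inter_subset_right)

lemma IncIntervalPartition.strictMono_sSup {I : Set ℕ} {J : ℕ → Set ℕ}
    (hJ : IncIntervalPartition I J) : StrictMono fun n => sSup (J n) :=
  strictMono_nat_of_lt_succ fun n => hJ.2.2.2 n (n + 1) n.lt_succ_self _
    ((hJ.1 n).csSup_mem (hJ.finite n)) _ ((hJ.1 (n + 1)).csSup_mem (hJ.finite (n + 1)))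

lemma RapidPlus.not_slowWrt {F : Filter ℕ} (hfree : F ≤ Filter.cofinite) (hR : RapidPlus F)
    {I : Set ℕ} {J : ℕ → Set ℕ} (hI : FStat F I) (hJ : IncIntervalPartition I J) :
    ¬ SlowWrt F I J := by
  intro hslow
  obtain ⟨B, hBI, hB, hBJ⟩ :=
    hR I hI (fun n => sSup (J n) + 1) (hJ.strictMono_sSup.add_const 1)
  obtain ⟨n, hn⟩ := hslow B hBI hB
  have hsub : B ∩ J n ⊆ B ∩ Iio (Nat.nth (· ∈ B) n) := fun x ⟨hxB, hxJ⟩ =>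
    ⟨hxB, (Nat.lt_succ_of_le (le_csSup (hJ.finite n).bddAbove hxJ)).trans_le (hBJ n)⟩
  have hle := ncard_le_ncard hsub ((finite_Iio _).inter_of_right B)
  rw [ncard_inter_Iio_nth (hB.infinite hfree)] at hle
  omega

lemma Set.Infinite.exists_cuts {I : Set ℕ} (hI : I.Infinite) (h : ℕ → ℕ) :
    ∃ a : ℕ → ℕ, a 0 = 0 ∧
      ∀ m, (I ∩ Ico (a m) (a (m + 1))).Nonempty ∧ h m < a (m + 1) := by
  choose g hgI hg using fun n => hI.exists_gt n
  let a : ℕ → ℕ := fun m => Nat.rec 0 (fun m am => g (max am (h m)) + 1) m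
  refine ⟨a, rfl, fun m => ⟨⟨g (max (a m) (h m)), hgI _, ?_, Nat.lt_succ_self _⟩, ?_⟩⟩
  · exact (le_max_left _ _).trans (hg _).le
  · exact Nat.lt_succ_of_lt ((le_max_right _ _).trans_lt (hg _))

lemma incIntervalPartition_of_cuts {I : Set ℕ} {a : ℕ → ℕ} (h0 : a 0 = 0)
    (hne : ∀ m, (I ∩ Ico (a m) (a (m + 1))).Nonempty) :
    IncIntervalPartition I fun m => I ∩ Ico (a m) (a (m + 1)) := by
  have ha : StrictMono a := strictMono_nat_of_lt_succ fun m =>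
    let ⟨_, _, h1, h2⟩ := hne m; h1.trans_lt h2
  refine ⟨hne, fun m => ⟨_, _, rfl⟩, ?_, ?_⟩
  · have hcover := iUnion_Ico_map_succ_eq_Ici (fun n => ha.monotone (Nat.zero_le n))
      ha.not_bddAbove_range_of_wellFoundedLT
    simp only [Order.succ_eq_add_one, Nat.bot_eq_zero, h0, Ici_zero_eq_univ] at hcover
    rw [← inter_iUnion, hcover, inter_univ]
  · rintro n m hnm x ⟨-, -, hx⟩ y ⟨-, hy, -⟩
    exact hx.trans_le ((ha.monotone hnm).trans hy)

lemma ncard_inter_Iio_cut_le_sq {A : Set ℕ} {a : ℕ → ℕ} (h0 : a 0 = 0)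
    (hA : ∀ m, (A ∩ Ico (a m) (a (m + 1))).ncard ≤ m) (m : ℕ) :
    (A ∩ Iio (a (m + 1))).ncard ≤ m ^ 2 := by
  induction m with
  | zero => simpa [h0, ← Ico_bot] using hA 0
  | succ m ih =>
    have hsub : A ∩ Iio (a (m + 2)) ⊆
        (A ∩ Iio (a (m + 1))) ∪ (A ∩ Ico (a (m + 1)) (a (m + 2))) := by
      rintro x ⟨hxA, hx⟩
      rcases lt_or_ge x (a (m + 1)) with h | h
      exacts [Or.inl ⟨hxA, h⟩, Or.inr ⟨hxA, h, hx⟩]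
    calc (A ∩ Iio (a (m + 2))).ncard
        ≤ (A ∩ Iio (a (m + 1))).ncard + (A ∩ Ico (a (m + 1)) (a (m + 2))).ncard :=
          (ncard_le_ncard hsub (((finite_Iio _).inter_of_right _).union
            ((finite_Ico _ _).inter_of_right _))).trans (ncard_union_le _ _)
      _ ≤ m ^ 2 + (m + 1) := add_le_add ih (hA _)
      _ ≤ (m + 1) ^ 2 := by ring_nf; omega

lemma cut_le_nth_of_slow {A : Set ℕ} (hA : A.Infinite) {a : ℕ → ℕ} (h0 : a 0 = 0)
    (hslow : ∀ m, (A ∩ Ico (a m) (a (m + 1))).ncard ≤ m) (n : ℕ) :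
    a (Nat.sqrt n + 1) ≤ Nat.nth (· ∈ A) n :=
  (le_nth_iff_ncard_inter_Iio_le hA).2
    ((ncard_inter_Iio_cut_le_sq h0 hslow _).trans (Nat.sqrt_le' n))

lemma slowWrt_of_cuts {F : Filter ℕ} (hfree : F ≤ Filter.cofinite) {I : Set ℕ}
    {f : ℕ → ℕ} (hf : StrictMono f) (hfI : ∀ B ⊆ I, FStat F B → ∃ n, Nat.nth (· ∈ B) n < f n)
    {a : ℕ → ℕ} (h0 : a 0 = 0) (ha : ∀ m, f ((m + 1) ^ 2) < a (m + 1)) :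
    SlowWrt F I fun m => I ∩ Ico (a m) (a (m + 1)) := by
  intro A hAI hA
  by_contra! hslow
  simp only [← inter_assoc, inter_eq_left.2 hAI] at hslow
  obtain ⟨n, hn⟩ := hfI A hAI hA
  have hfn : f n < f ((Nat.sqrt n + 1) ^ 2) := hf (Nat.sqrt_lt'.1 (Nat.lt_succ_self _))
  exact hn.not_ge ((hfn.trans (ha _)).le.trans (cut_le_nth_of_slow (hA.infinite hfree) h0 hslow n))

theorem stmt_2_general (F : Filter ℕ) (hfree : F ≤ Filter.cofinite) :
    RapidPlus F ↔
      ¬ ∃ (I : Set ℕ) (J : ℕ → Set ℕ),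
          FStat F I ∧ IncIntervalPartition I J ∧ SlowWrt F I J := by
  refine ⟨fun hR ⟨I, J, hI, hJ, hslow⟩ => hR.not_slowWrt hfree hI hJ hslow, fun h => ?_⟩
  by_contra hR
  simp only [RapidPlus, not_forall, not_exists, not_and, not_le] at hR
  obtain ⟨I, hI, f, hf, hfI⟩ := hR
  obtain ⟨a, h0, ha⟩ := (hI.infinite hfree).exists_cuts fun m => f ((m + 1) ^ 2)
  exact h ⟨I, _, hI, incIntervalPartition_of_cuts h0 (fun m => (ha m).1),
    slowWrt_of_cuts hfree hf hfI h0 (fun m => (ha m).2)⟩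

theorem stmt_2 (F : Filter ℕ) (hfree : F ≤ Filter.cofinite) [F.NeBot] :
    RapidPlus F ↔
      ¬ ∃ (I : Set ℕ) (J : ℕ → Set ℕ),
          FStat F I ∧ IncIntervalPartition I J ∧ SlowWrt F I J :=
  stmt_2_general F hfree
end

section
/- The asymptotic density filter F_d, consisting of sets A ⊆ ℕ with lim_{n→∞} |{k < n : k ∈ A}|/n = 1, is a weak P⁺-filter but is not a P⁺-filter and is not a rapid⁺ filter. -/
/-!
Stationary sets for the density filter are exactly the sets of positive upper density.

Weak P⁺: if `I` has upper density `> ε` and each `A k` has density one, pick `N k` beyond which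
`(A k)ᶜ` has at most `ε 2^(-k-2) n` elements below `n`, and remove from `I` every `x ≥ N k`
outside `A k`. Below `n` this removes at most `ε n / 2` points, so the remaining `B` still has
positive upper density, while `B \ A k ⊆ [0, N k)`.

Not P⁺: the multiples of `2 ^ k` form a decreasing sequence of sets of density `2^(-k)`, so every
pseudo-intersection has density zero.

Not rapid⁺: a set whose `n`-th element is at least `(n + 1)²` has at most `√m` elements below `m`.
-/

/-- The asymptotic density filter, as a family of subsets of ℕ. -/
def densityFilter : Set (Set ℕ) :=
  {A | Filter.Tendsto (fun n => ((Set.Iio n ∩ A).ncard : ℝ) / n) Filter.atTop (nhds 1)}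

/-- A set is `G`-stationary if its complement is not in `G`. -/
def GStat (G : Set (Set ℕ)) (A : Set ℕ) : Prop := Aᶜ ∉ G

/-- `G` is a weak P⁺-filter. -/
def GWeakPPlus (G : Set (Set ℕ)) : Prop :=
  ∀ A : ℕ → Set ℕ, (∀ k, A k ∈ G) → Antitone A →
    ∀ I : Set ℕ, GStat G I → ∃ B ⊆ I, GStat G B ∧ ∀ k, (B \ A k).Finite

/-- `G` is a P⁺-filter. -/
def GPPlus (G : Set (Set ℕ)) : Prop :=
  ∀ A : ℕ → Set ℕ, (∀ k, GStat G (A k)) → Antitone A →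
    ∃ B : Set ℕ, GStat G B ∧ ∀ k, (B \ A k).Finite

/-- `G` is rapid⁺. -/
def GRapidPlus (G : Set (Set ℕ)) : Prop :=
  ∀ I : Set ℕ, GStat G I → ∀ f : ℕ → ℕ, StrictMono f →
    ∃ B ⊆ I, GStat G B ∧ ∀ n, f n ≤ Nat.nth (· ∈ B) n

open Filter Set

noncomputable def countBelow (A : Set ℕ) (n : ℕ) : ℕ := (Iio n ∩ A).ncard

lemma countBelow_mono {A B : Set ℕ} (h : A ⊆ B) (n : ℕ) : countBelow A n ≤ countBelow B n :=
  ncard_le_ncard (inter_subset_inter_right _ h) ((finite_Iio n).inter_of_left B)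

lemma countBelow_union_le (A B : Set ℕ) (n : ℕ) :
    countBelow (A ∪ B) n ≤ countBelow A n + countBelow B n := by
  rw [countBelow, inter_union_distrib_left]
  exact ncard_union_le _ _

lemma countBelow_add_countBelow_compl (A : Set ℕ) (n : ℕ) :
    countBelow A n + countBelow Aᶜ n = n := by
  rw [countBelow, countBelow, ← sdiff_eq, ncard_inter_add_ncard_sdiff_eq_ncard _ _ (finite_Iio n),
    ncard_Iio_nat]

lemma countBelow_univ (n : ℕ) : countBelow univ n = n := by
  simp [countBelow]

lemma countBelow_eq_count (A : Set ℕ) [DecidablePred (· ∈ A)] (n : ℕ) :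
    countBelow A n = Nat.count (· ∈ A) n := by
  rw [Nat.count_eq_card_filter_range, countBelow, ← ncard_coe_finset]
  congr 1
  ext x
  simp

lemma countBelow_le_of_diff_finite {A B : Set ℕ} (h : (B \ A).Finite) :
    ∃ C, ∀ n, countBelow B n ≤ countBelow A n + C :=
  ⟨(B \ A).ncard, fun n => calc
    countBelow B n ≤ countBelow (A ∪ B \ A) n := countBelow_mono (by simp) n
    _ ≤ countBelow A n + countBelow (B \ A) n := countBelow_union_le _ _ n
    _ ≤ countBelow A n + (B \ A).ncard := by
      gcongr
      exact ncard_le_ncard inter_subset_right h⟩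

lemma countBelow_iUnion_le {T : ℕ → Set ℕ} (hT : ∀ k, T k ⊆ Ici k) (n : ℕ) :
    countBelow (⋃ k, T k) n ≤ ∑ k ∈ Finset.range n, countBelow (T k) n := by
  have hsupp : Iio n ∩ ⋃ k, T k = ⋃ k ∈ Finset.range n, Iio n ∩ T k := by
    ext x
    simp only [mem_inter_iff, mem_Iio, mem_iUnion, Finset.mem_range, exists_prop]
    exact ⟨fun ⟨hx, k, hk⟩ => ⟨k, (hT k hk).trans_lt hx, hx, hk⟩,
      fun ⟨k, _, hx, hk⟩ => ⟨hx, k, hk⟩⟩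
  rw [countBelow, hsupp]
  exact Finset.set_ncard_biUnion_le _ _

def HasDensityZero (A : Set ℕ) : Prop :=
  ∀ ε : ℝ, 0 < ε → ∀ᶠ n in atTop, (countBelow A n : ℝ) < ε * n

lemma hasDensityZero_iff_tendsto {A : Set ℕ} :
    HasDensityZero A ↔ Tendsto (fun n => (countBelow A n : ℝ) / n) atTop (nhds 0) := by
  have hdiv : ∀ ε : ℝ, ∀ᶠ n : ℕ in atTop,
      (countBelow A n : ℝ) / n < ε ↔ (countBelow A n : ℝ) < ε * n := fun ε => by
    filter_upwards [eventually_gt_atTop 0] with n hn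
    exact div_lt_iff₀ (by exact_mod_cast hn)
  rw [tendsto_order]
  refine ⟨fun h => ⟨fun a ha => Eventually.of_forall fun n => ha.trans_le (by positivity),
    fun ε hε => ?_⟩, fun h ε hε => ?_⟩
  · filter_upwards [h ε hε, hdiv ε] with n hn hiff using hiff.2 hn
  · filter_upwards [h.2 ε hε, hdiv ε] with n hn hiff using hiff.1 hn

lemma compl_mem_densityFilter_iff {A : Set ℕ} : Aᶜ ∈ densityFilter ↔ HasDensityZero A := by
  have hcompl : ∀ᶠ n : ℕ in atTop,
      (countBelow Aᶜ n : ℝ) / n = 1 - countBelow A n / n := by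
    filter_upwards [eventually_gt_atTop 0] with n hn
    have hsum : (countBelow A n : ℝ) + countBelow Aᶜ n = n := by
      exact_mod_cast countBelow_add_countBelow_compl A n
    field_simp
    linarith
  change Tendsto (fun n => (countBelow Aᶜ n : ℝ) / n) atTop (nhds 1) ↔ _
  rw [hasDensityZero_iff_tendsto, tendsto_congr' hcompl]
  constructor <;> intro h <;> simpa using (tendsto_const_nhds (x := (1 : ℝ))).sub h

lemma gStat_densityFilter_iff {A : Set ℕ} : GStat densityFilter A ↔ ¬ HasDensityZero A :=
  not_congr compl_mem_densityFilter_iff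

lemma not_hasDensityZero_iff {A : Set ℕ} :
    ¬ HasDensityZero A ↔ ∃ ε : ℝ, 0 < ε ∧ ∃ᶠ n in atTop, ε * n ≤ countBelow A n := by
  simp only [HasDensityZero, not_forall, not_eventually, not_lt, exists_prop]

lemma HasDensityZero.exists_tail_le {S : Set ℕ} (hS : HasDensityZero S) {δ : ℝ} (hδ : 0 < δ)
    (k : ℕ) : ∃ N ≥ k, ∀ n, (countBelow (S ∩ Ici N) n : ℝ) ≤ δ * n := by
  obtain ⟨N, hN⟩ := eventually_atTop.1 ((hS δ hδ).and (eventually_ge_atTop k))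
  refine ⟨N, (hN N le_rfl).2, fun n => ?_⟩
  rcases le_or_gt N n with hn | hn
  · exact ((Nat.cast_le.2 (countBelow_mono inter_subset_left n)).trans_lt (hN n hn).1).le
  · have hempty : Iio n ∩ (S ∩ Ici N) = ∅ := by
      ext x
      simp only [mem_inter_iff, mem_Iio, mem_Ici, mem_empty_iff_false, iff_false]
      omega
    simp only [countBelow, hempty, ncard_empty, Nat.cast_zero]
    positivity

theorem exists_subset_not_hasDensityZero_diff_finite {A : ℕ → Set ℕ}
    (hA : ∀ k, A k ∈ densityFilter) {I : Set ℕ} (hI : ¬ HasDensityZero I) :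
    ∃ B ⊆ I, ¬ HasDensityZero B ∧ ∀ k, (B \ A k).Finite := by
  obtain ⟨ε, hε, hfreq⟩ := not_hasDensityZero_iff.1 hI
  have hAc : ∀ k, HasDensityZero (A k)ᶜ :=
    fun k => compl_mem_densityFilter_iff.1 (by rw [compl_compl]; exact hA k)
  choose N hkN hN using fun k =>
    (hAc k).exists_tail_le (δ := ε / 4 * (1 / 2) ^ k) (by positivity) k
  set T : ℕ → Set ℕ := fun k => (A k)ᶜ ∩ Ici (N k)
  have hsmall : ∀ n, (countBelow (⋃ k, T k) n : ℝ) ≤ ε / 2 * n := fun n => calc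
    (countBelow (⋃ k, T k) n : ℝ) ≤ ∑ k ∈ Finset.range n, (countBelow (T k) n : ℝ) := by
      exact_mod_cast countBelow_iUnion_le (fun k x (hx : x ∈ T k) => (hkN k).trans hx.2) n
    _ ≤ ∑ k ∈ Finset.range n, ε / 4 * (1 / 2) ^ k * n := Finset.sum_le_sum fun k _ => hN k n
    _ = ε / 4 * n * ∑ k ∈ Finset.range n, (1 / 2 : ℝ) ^ k := by
      rw [Finset.mul_sum]
      exact Finset.sum_congr rfl fun k _ => by ring
    _ ≤ ε / 4 * n * 2 := by gcongr; exact sum_geometric_two_le n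
    _ = ε / 2 * n := by ring
  refine ⟨I \ ⋃ k, T k, sdiff_subset, ?_, fun k => ?_⟩
  · refine not_hasDensityZero_iff.2 ⟨ε / 2, by positivity, hfreq.mono fun n hn => ?_⟩
    have hsplit :
        (countBelow I n : ℝ) ≤ countBelow (I \ ⋃ k, T k) n + countBelow (⋃ k, T k) n := by
      exact_mod_cast (countBelow_mono (subset_sdiff_union _ _) n).trans (countBelow_union_le _ _ n)
    linarith [hsmall n]
  · refine (finite_Iio (N k)).subset fun x hx => ?_
    by_contra hge
    exact hx.1.2 (mem_iUnion.2 ⟨k, hx.2, mem_Ici.2 (by simpa using hge)⟩)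

theorem gWeakPPlus_densityFilter : GWeakPPlus densityFilter := by
  intro A hA _ I hI
  obtain ⟨B, hBI, hB, hfin⟩ :=
    exists_subset_not_hasDensityZero_diff_finite hA (gStat_densityFilter_iff.1 hI)
  exact ⟨B, hBI, gStat_densityFilter_iff.2 hB, hfin⟩

lemma countBelow_modEq_zero {r : ℕ} (hr : 0 < r) (n : ℕ) :
    countBelow {x | x ≡ 0 [MOD r]} n = n / r + if 0 < n % r then 1 else 0 := by
  rw [countBelow_eq_count, ← Nat.zero_mod r]
  exact Nat.count_modEq_card n hr 0

lemma not_hasDensityZero_modEq_zero {r : ℕ} (hr : 0 < r) :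
    ¬ HasDensityZero {x | x ≡ 0 [MOD r]} := by
  refine not_hasDensityZero_iff.2 ⟨1 / r, by positivity, frequently_atTop.2 fun N =>
    ⟨r * N, Nat.le_mul_of_pos_left N hr, ?_⟩⟩
  rw [countBelow_modEq_zero hr, Nat.mul_mod_right, Nat.mul_div_cancel_left N hr]
  field_simp
  simp

lemma eventually_countBelow_modEq_zero_lt {r : ℕ} (hr : 0 < r) {ε : ℝ} (hε : 1 < ε * r) :
    ∀ᶠ n in atTop, (countBelow {x | x ≡ 0 [MOD r]} n : ℝ) < ε * n := by
  have hr' : (0 : ℝ) < r := by exact_mod_cast hr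
  have hgap : 0 < ε - 1 / r := by
    rw [sub_pos, div_lt_iff₀ hr']
    exact hε
  filter_upwards [(tendsto_natCast_atTop_atTop.const_mul_atTop hgap).eventually_gt_atTop 1]
    with n hn
  have hcount : (countBelow {x | x ≡ 0 [MOD r]} n : ℝ) ≤ n / r + 1 := by
    rw [countBelow_modEq_zero hr]
    push_cast
    gcongr
    · exact Nat.cast_div_le
    · split_ifs <;> norm_num
  calc (countBelow {x | x ≡ 0 [MOD r]} n : ℝ) ≤ n / r + 1 := hcount
    _ < n / r + (ε - 1 / r) * n := by gcongr
    _ = ε * n := by ring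

lemma hasDensityZero_of_forall_diff_finite {A : ℕ → Set ℕ} {B : Set ℕ}
    (hA : ∀ ε : ℝ, 0 < ε → ∃ k, ∀ᶠ n in atTop, (countBelow (A k) n : ℝ) < ε * n)
    (hB : ∀ k, (B \ A k).Finite) : HasDensityZero B := by
  intro ε hε
  obtain ⟨k, hk⟩ := hA (ε / 2) (by positivity)
  obtain ⟨C, hC⟩ := countBelow_le_of_diff_finite (hB k)
  filter_upwards [hk,
    (tendsto_natCast_atTop_atTop.const_mul_atTop (half_pos hε)).eventually_gt_atTop (C : ℝ)]
    with n hkn hCn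
  have hBn : (countBelow B n : ℝ) ≤ countBelow (A k) n + C := by exact_mod_cast hC n
  linarith

theorem not_gPPlus_densityFilter : ¬ GPPlus densityFilter := by
  intro h
  have hpos : ∀ k, 0 < 2 ^ k := fun k => Nat.two_pow_pos k
  obtain ⟨B, hB, hfin⟩ := h (fun k => {x | x ≡ 0 [MOD 2 ^ k]})
    (fun k => gStat_densityFilter_iff.2 (not_hasDensityZero_modEq_zero (hpos k)))
    (fun k l hkl x hx => Nat.ModEq.of_dvd (pow_dvd_pow 2 hkl) hx)
  refine gStat_densityFilter_iff.1 hB (hasDensityZero_of_forall_diff_finite (fun ε hε => ?_) hfin)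
  obtain ⟨k, hk⟩ := pow_unbounded_of_one_lt (1 / ε) one_lt_two
  refine ⟨k, eventually_countBelow_modEq_zero_lt (hpos k) ?_⟩
  rw [div_lt_iff₀ hε] at hk
  push_cast
  linarith

lemma countBelow_le_sqrt_of_sq_le_nth {B : Set ℕ} (h : ∀ n, (n + 1) ^ 2 ≤ Nat.nth (· ∈ B) n)
    (m : ℕ) : countBelow B m ≤ Nat.sqrt m := by
  classical
  have hinf : B.Infinite := fun hfin => by
    have hpos := h hfin.toFinset.card
    rw [Nat.nth_of_card_le (p := (· ∈ B)) hfin le_rfl] at hpos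
    simp at hpos
  rw [countBelow_eq_count, Nat.count_le_iff_le_nth (p := (· ∈ B)) hinf]
  exact (Nat.lt_succ_sqrt' m).le.trans (h _)

lemma hasDensityZero_of_sq_le_nth {B : Set ℕ} (h : ∀ n, (n + 1) ^ 2 ≤ Nat.nth (· ∈ B) n) :
    HasDensityZero B := by
  intro ε hε
  filter_upwards [eventually_gt_atTop 0,
    (tendsto_natCast_atTop_atTop.const_mul_atTop (pow_pos hε 2)).eventually_gt_atTop 1]
    with m hm hεm
  have hm' : (0 : ℝ) < m := by exact_mod_cast hm
  calc (countBelow B m : ℝ) ≤ Nat.sqrt m := by exact_mod_cast countBelow_le_sqrt_of_sq_le_nth h m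
    _ ≤ √(m : ℝ) := Real.nat_sqrt_le_real_sqrt
    _ < ε * m := by
      rw [Real.sqrt_lt' (by positivity)]
      nlinarith

lemma not_hasDensityZero_univ : ¬ HasDensityZero univ := fun h => by
  obtain ⟨n, hn⟩ := (h 1 one_pos).exists
  simp [countBelow_univ] at hn

theorem not_gRapidPlus_densityFilter : ¬ GRapidPlus densityFilter := by
  intro h
  obtain ⟨B, -, hB, hnth⟩ := h univ (gStat_densityFilter_iff.2 not_hasDensityZero_univ)
    (fun n => (n + 1) ^ 2) (fun a b hab => Nat.pow_lt_pow_left (by omega) two_ne_zero)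
  exact gStat_densityFilter_iff.1 hB (hasDensityZero_of_sq_le_nth hnth)

theorem stmt_3 :
    GWeakPPlus densityFilter ∧ ¬ GPPlus densityFilter ∧ ¬ GRapidPlus densityFilter :=
  ⟨gWeakPPlus_densityFilter, not_gPPlus_densityFilter, not_gRapidPlus_densityFilter⟩
end

section
/- Let b = (b₁,b₂) : ℕ → ℕ × ℕ be a bijection and let F_p = {A ⊆ ℕ : for every k, the set {b₂(n) : n ∈ A, b₁(n) = k} is cofinite in ℕ}. Then F_p is a weak P⁺-filter and a rapid⁺ filter, but F_p is not a P⁺-filter. -/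
/-- The filter `F_p ≅ {ℕ} × C`: `A` belongs to it iff for every `k`, the set
`{b₂(n) : n ∈ A, b₁(n) = k}` is cofinite in ℕ. -/
def prodFilter (b₁ b₂ : ℕ → ℕ) : Set (Set ℕ) :=
  {A : Set ℕ | ∀ k : ℕ, (b₂ '' (A ∩ b₁ ⁻¹' {k}))ᶜ.Finite}

/-!
Via the bijection `b`, a set belongs to `F_p` iff it contains all but finitely many points of
every column `b₁⁻¹{k}`, so it is `F_p`-stationary iff it meets some column in an infinite set.
Weak P⁺: an infinite column piece of `I` is almost contained in every member of `F_p`.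
Rapid⁺: that column piece can be thinned out to a sparse infinite subset.
Not P⁺: the sets `{n | k ≤ b₁ n}` are stationary and decreasing, but a pseudo-intersection of
them meets every column in a finite set.
-/

theorem StrictMono.le_nth_mem_range {g : ℕ → ℕ} (hg : StrictMono g) (n : ℕ) :
    g n ≤ Nat.nth (· ∈ Set.range g) n := by
  have hinf : (Set.range g).Infinite := Set.infinite_range_of_injective hg.injective
  have hall : ∀ m, ∀ hf : (Set.ofPred (· ∈ Set.range g)).Finite, m < hf.toFinset.card :=
    fun _ hf => absurd hf hinf
  refine Nat.le_nth_of_monotoneOn_of_surjOn g ?_ (hg.monotone.monotoneOn _) (hall n)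
  rintro _ ⟨m, rfl⟩
  exact ⟨m, hall m, rfl⟩

theorem Set.Infinite.exists_subset_forall_le_nth {S : Set ℕ} (hS : S.Infinite) {f : ℕ → ℕ}
    (hf : StrictMono f) : ∃ B ⊆ S, B.Infinite ∧ ∀ n, f n ≤ Nat.nth (· ∈ B) n := by
  set g : ℕ → ℕ := fun n => Nat.nth (· ∈ S) (f n)
  have hg : StrictMono g := fun _ _ h => (Nat.nth_lt_nth hS).2 (hf h)
  refine ⟨Set.range g, ?_, Set.infinite_range_of_injective hg.injective, fun n => ?_⟩
  · rintro _ ⟨n, rfl⟩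
    exact Nat.nth_mem_of_infinite hS _
  · calc f n ≤ g n := Nat.le_nth fun hfin => absurd hfin hS
      _ ≤ _ := hg.le_nth_mem_range n

section prodFilter

variable {b₁ b₂ : ℕ → ℕ}

theorem injOn_snd_fiber (hinj : Function.Injective fun n => (b₁ n, b₂ n)) (k : ℕ) :
    Set.InjOn b₂ (b₁ ⁻¹' {k}) := fun _ hx _ hy hxy =>
  hinj (Prod.ext (hx.trans hy.symm) hxy)

theorem image_snd_fiber (hsurj : Function.Surjective fun n => (b₁ n, b₂ n)) (k : ℕ) :
    b₂ '' (b₁ ⁻¹' {k}) = Set.univ :=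
  Set.eq_univ_of_forall fun m =>
    let ⟨n, hn⟩ := hsurj (k, m)
    ⟨n, congrArg Prod.fst hn, congrArg Prod.snd hn⟩

theorem infinite_fiber (hsurj : Function.Surjective fun n => (b₁ n, b₂ n)) (k : ℕ) :
    (b₁ ⁻¹' {k}).Infinite :=
  .of_image b₂ (by rw [image_snd_fiber hsurj k]; exact Set.infinite_univ)

variable (hbij : Function.Bijective fun n => (b₁ n, b₂ n))
include hbij

theorem compl_image_inter_fiber (S : Set ℕ) (k : ℕ) :
    (b₂ '' (S ∩ b₁ ⁻¹' {k}))ᶜ = b₂ '' (Sᶜ ∩ b₁ ⁻¹' {k}) := by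
  rw [Set.inter_comm, ← Set.sdiff_eq_compl_inter, (injOn_snd_fiber hbij.1 k).image_sdiff,
    image_snd_fiber hbij.2, Set.inter_comm, Set.compl_eq_univ_sdiff]

theorem mem_prodFilter_iff (A : Set ℕ) :
    A ∈ prodFilter b₁ b₂ ↔ ∀ k, (Aᶜ ∩ b₁ ⁻¹' {k}).Finite := by
  refine forall_congr' fun k => ?_
  rw [compl_image_inter_fiber hbij]
  exact Set.finite_image_iff ((injOn_snd_fiber hbij.1 k).mono Set.inter_subset_right)

theorem gStat_prodFilter_iff (A : Set ℕ) :
    GStat (prodFilter b₁ b₂) A ↔ ∃ k, (A ∩ b₁ ⁻¹' {k}).Infinite := by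
  simp only [GStat, mem_prodFilter_iff hbij, compl_compl, not_forall, Set.Infinite]

theorem prodFilter_weakPPlus : GWeakPPlus (prodFilter b₁ b₂) := by
  intro A hA _ I hI
  obtain ⟨k, hk⟩ := (gStat_prodFilter_iff hbij I).1 hI
  refine ⟨I ∩ b₁ ⁻¹' {k}, Set.inter_subset_left, ?_, fun j => ?_⟩
  · exact (gStat_prodFilter_iff hbij _).2 ⟨k, by rwa [Set.inter_assoc, Set.inter_self]⟩
  · refine ((mem_prodFilter_iff hbij _).1 (hA j) k).subset ?_
    rintro n ⟨⟨-, hnk⟩, hnA⟩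
    exact ⟨hnA, hnk⟩

theorem prodFilter_rapidPlus : GRapidPlus (prodFilter b₁ b₂) := by
  intro I hI f hf
  obtain ⟨k, hk⟩ := (gStat_prodFilter_iff hbij I).1 hI
  obtain ⟨B, hBI, hB, hfB⟩ := hk.exists_subset_forall_le_nth hf
  refine ⟨B, hBI.trans Set.inter_subset_left, (gStat_prodFilter_iff hbij B).2 ⟨k, ?_⟩, hfB⟩
  rwa [Set.inter_eq_left.2 (hBI.trans Set.inter_subset_right)]

theorem not_prodFilter_pPlus : ¬ GPPlus (prodFilter b₁ b₂) := by
  intro hP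
  obtain ⟨B, hB, hBA⟩ := hP (fun k => {n | k ≤ b₁ n})
    (fun k => (gStat_prodFilter_iff hbij _).2
      ⟨k, (infinite_fiber hbij.2 k).mono fun n hn => ⟨hn.ge, hn⟩⟩)
    (fun _ _ hkl _ hn => hkl.trans hn)
  obtain ⟨j, hj⟩ := (gStat_prodFilter_iff hbij B).1 hB
  refine hj ((hBA (j + 1)).subset ?_)
  rintro n ⟨hnB, hnj : b₁ n = j⟩
  exact ⟨hnB, by simp [hnj]⟩

end prodFilter

theorem stmt_5 (b₁ b₂ : ℕ → ℕ)
    (hbij : Function.Bijective (fun n => (b₁ n, b₂ n))) :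
    GWeakPPlus (prodFilter b₁ b₂) ∧ GRapidPlus (prodFilter b₁ b₂) ∧
      ¬ GPPlus (prodFilter b₁ b₂) :=
  ⟨prodFilter_weakPPlus hbij, prodFilter_rapidPlus hbij, not_prodFilter_pPlus hbij⟩
end

section
/- Let X be a completely metrizable topological vector space and let (V_n) and (A_n) be two countable bases for the filter of 0-neighbourhoods of X such that A_n + A_{n+1} + ... + A_{n+l} ⊆ V_n for all l ≥ 0, n ≥ 1, and such that each V_n is closed. Then for every sequence (C_n) of subsets of X that is (A_n)-connected, the intersection ⋂_{n≥1} (C_n + V_{n+1}) is non-empty. -/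
/-!
Following the connecting relation produces points `y n ∈ C (n + 1)` whose consecutive
differences lie in `A (n + 2)`, so by the hypothesis on sums of the `A`'s every tail difference
`y m - y n` lies in `V (n + 2)`. Since `0` is not isolated in a nontrivial real topological vector
space, the `V i` with `i ≥ 2` still form a basis at `0`; hence `(y n)` is Cauchy, and its limit `z`
satisfies `z - y (n - 1) ∈ V (n + 1)` because `V (n + 1)` is closed.
-/

open Pointwise Filter Topology Uniformity

theorem Filter.HasBasis.nhds_restrict_ge {X : Type*} [TopologicalSpace X] [T1Space X] {a : X}
    [(𝓝[≠] a).NeBot] {V : ℕ → Set X} (h : (𝓝 a).HasBasis (fun _ => True) V) (N : ℕ) :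
    (𝓝 a).HasBasis (fun i => N ≤ i) V := by
  have hne : ∀ j, ∃ y ∈ V j, y ≠ a := fun j =>
    nonempty_of_mem (inter_mem (mem_nhdsWithin_of_mem_nhds (h.mem_of_mem trivial))
      (self_mem_nhdsWithin (s := {a}ᶜ)))
  choose y hyV hya using hne
  refine ⟨fun U => ⟨fun hU => ?_, fun ⟨i, _, hi⟩ => mem_of_superset (h.mem_of_mem trivial) hi⟩⟩
  -- Avoiding the finitely many points `y j ∈ V j \ {a}`, `j < N`, rules out the indices below `N`.
  have hy : (y '' Set.Iio N)ᶜ ∈ 𝓝 a :=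
    ((Set.finite_Iio N).image y).isClosed.compl_mem_nhds fun ⟨j, _, hj⟩ => hya j hj
  obtain ⟨i, -, hi⟩ := h.mem_iff.1 (inter_mem hU hy)
  exact ⟨i, not_lt.1 fun hiN => (hi (hyV i)).2 ⟨i, hiN, rfl⟩, hi.trans Set.inter_subset_left⟩

theorem exists_seq_mem_and_sub_mem {X : Type*} [AddCommGroup X] {A C : ℕ → Set X}
    (hC1 : (C 1).Nonempty)
    (hconn : ∀ n ≥ 2, ∀ x ∈ C (n - 1), ((x + ·) '' A n ∩ C n).Nonempty) :
    ∃ y : ℕ → X, (∀ n, y n ∈ C (n + 1)) ∧ ∀ n, y (n + 1) - y n ∈ A (n + 2) := by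
  have step : ∀ n, ∀ x ∈ C (n + 1), ∃ z ∈ C (n + 2), z - x ∈ A (n + 2) := by
    intro n x hx
    obtain ⟨_, ⟨a, ha, rfl⟩, hz⟩ := hconn (n + 2) (by omega) x hx
    exact ⟨x + a, hz, by simpa using ha⟩
  choose f hfC hfA using step
  let y : (n : ℕ) → C (n + 1) := fun n =>
    Nat.rec ⟨hC1.some, hC1.some_mem⟩ (fun k x => ⟨f k x x.2, hfC k x x.2⟩) n
  exact ⟨fun n => (y n).1, fun n => (y n).2, fun n => hfA n _ (y n).2⟩

theorem sub_mem_of_forall_succ_sub_mem {X : Type*} [AddCommGroup X] {V A : ℕ → Set X}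
    (hL1 : ∀ n ≥ 1, ∀ l : ℕ, ∀ g : ℕ → X,
      (∀ j ≤ l, g j ∈ A (n + j)) → ∑ j ∈ Finset.range (l + 1), g j ∈ V n)
    (hV0 : ∀ n, (0 : X) ∈ V n) {y : ℕ → X} {d : ℕ} (hd : 1 ≤ d)
    (hy : ∀ k, y (k + 1) - y k ∈ A (k + d)) {n m : ℕ} (hnm : n ≤ m) :
    y m - y n ∈ V (n + d) := by
  obtain ⟨l, rfl⟩ := Nat.exists_eq_add_of_le hnm
  cases l with
  | zero => simpa using hV0 (n + d)
  | succ l =>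
    have hsum := hL1 (n + d) (by omega) l (fun j => y (n + (j + 1)) - y (n + j))
      fun j _ => by simpa [add_right_comm, add_assoc] using hy (n + j)
    rwa [Finset.sum_range_sub (fun j => y (n + j)), add_zero] at hsum

theorem cauchySeq_of_sub_mem {X : Type*} [AddCommGroup X] [UniformSpace X] [IsUniformAddGroup X]
    {V : ℕ → Set X} {K : ℕ} (hV : (𝓝 (0 : X)).HasBasis (fun i => K ≤ i) V) {y : ℕ → X}
    (hy : ∀ n m, n ≤ m → y m - y n ∈ V (n + K)) : CauchySeq y := by
  have hb : (𝓤 X).HasBasis (fun i => K ≤ i) fun i => {p : X × X | p.1 - p.2 ∈ V i} := by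
    rw [uniformity_eq_comap_nhds_zero_swapped]
    exact hV.comap _
  rw [hb.cauchySeq_iff']
  exact fun i hi => ⟨i - K, fun n hn => by simpa [Nat.sub_add_cancel hi] using hy _ _ hn⟩

theorem stmt_6_general {X : Type*} [AddCommGroup X] [Module ℝ X] [UniformSpace X]
    [IsUniformAddGroup X] [ContinuousSMul ℝ X] [CompleteSpace X]
    [TopologicalSpace.MetrizableSpace X]
    (V A : ℕ → Set X)
    (hV : (nhds (0 : X)).HasBasis (fun _ : ℕ => True) V)
    (hVclosed : ∀ n, IsClosed (V n))
    (hL1 : ∀ n ≥ 1, ∀ l : ℕ, ∀ g : ℕ → X,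
      (∀ j ≤ l, g j ∈ A (n + j)) → ∑ j ∈ Finset.range (l + 1), g j ∈ V n)
    (C : ℕ → Set X)
    (hC1 : (C 1).Nonempty)
    (hconn : ∀ n ≥ 2, ∀ x ∈ C (n - 1), ((x + ·) '' A n ∩ C n).Nonempty) :
    (⋂ n, ⋂ (_ : 1 ≤ n), (C n + V (n + 1))).Nonempty := by
  obtain ⟨y, hyC, hyA⟩ := exists_seq_mem_and_sub_mem hC1 hconn
  have hV0 : ∀ n, (0 : X) ∈ V n := fun n => mem_of_mem_nhds (hV.mem_of_mem trivial)
  have hyV : ∀ n m, n ≤ m → y m - y n ∈ V (n + 2) := fun _ _ =>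
    sub_mem_of_forall_succ_sub_mem hL1 hV0 (by norm_num) hyA
  obtain ⟨z, hz⟩ : ∃ z, Tendsto y atTop (𝓝 z) := by
    rcases subsingleton_or_nontrivial X with _ | _
    · exact ⟨y 0, tendsto_const_nhds.congr fun _ => Subsingleton.elim _ _⟩
    · exact cauchySeq_tendsto_of_complete (cauchySeq_of_sub_mem (hV.nhds_restrict_ge 2) hyV)
  refine ⟨z, Set.mem_iInter₂.2 fun n hn => ?_⟩
  obtain ⟨k, rfl⟩ := Nat.exists_eq_add_of_le' hn
  have hzV : z - y k ∈ V (k + 2) := (hVclosed _).mem_of_tendsto (hz.sub_const _)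
    (eventually_atTop.2 ⟨k, fun m hm => hyV k m hm⟩)
  exact ⟨y k, hyC k, z - y k, hzV, add_sub_cancel _ _⟩

theorem stmt_6 {X : Type*} [AddCommGroup X] [Module ℝ X] [UniformSpace X]
    [IsUniformAddGroup X] [ContinuousSMul ℝ X] [CompleteSpace X]
    [TopologicalSpace.MetrizableSpace X]
    (V A : ℕ → Set X)
    (hV : (nhds (0 : X)).HasBasis (fun _ : ℕ => True) V)
    (hA : (nhds (0 : X)).HasBasis (fun _ : ℕ => True) A)
    (hVclosed : ∀ n, IsClosed (V n))
    (hL1 : ∀ n ≥ 1, ∀ l : ℕ, ∀ g : ℕ → X,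
      (∀ j ≤ l, g j ∈ A (n + j)) → ∑ j ∈ Finset.range (l + 1), g j ∈ V n)
    (C : ℕ → Set X)
    (hC1 : (C 1).Nonempty)
    (hconn : ∀ n ≥ 2, ∀ x ∈ C (n - 1), ((x + ·) '' A n ∩ C n).Nonempty) :
    (⋂ n, ⋂ (_ : 1 ≤ n), (C n + V (n + 1))).Nonempty :=
  stmt_6_general V A hV hVclosed hL1 C hC1 hconn
end

section
/- Let X be a real vector space and p, q₁, ..., q_k seminorms on X. If each q_i is unbounded on the closed unit ball B_p = {x : p(x) ≤ 1}, then the pointwise minimum min(q₁,...,q_k) is unbounded on B_p. -/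
/-!
Induct over the finite index set, proving that the seminorms can be made to exceed arbitrary
per-index thresholds at a single point of the unit ball of `p`. To add a seminorm `q a`, first pick
`y` in the ball with `q a y` large, then `x` in the ball with every other `q i x` larger than
`q i y` by a margin. Either `x` already works for `q a`, or `q a x` is small and the midpoint of `x`
and `y` works for all of them: by the reverse triangle inequality it keeps half of `q i x - q i y`
and half of `q a y - q a x`.
-/

namespace Seminorm

variable {𝕜 X : Type*} [RCLike 𝕜] [AddCommGroup X] [Module 𝕜 X]

theorem map_midpoint (r : Seminorm 𝕜 X) (x y : X) :
    r ((2 : 𝕜)⁻¹ • (x + y)) = r (x + y) / 2 := by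
  rw [map_smul_eq_mul, norm_inv, RCLike.norm_two, inv_mul_eq_div]

theorem map_midpoint_le (r : Seminorm 𝕜 X) {x y : X} (hx : r x ≤ 1) (hy : r y ≤ 1) :
    r ((2 : 𝕜)⁻¹ • (x + y)) ≤ 1 := by
  rw [map_midpoint]
  linarith [map_add_le_add r x y]

theorem sub_le_two_mul_map_midpoint (r : Seminorm 𝕜 X) (x y : X) :
    r x - r y ≤ 2 * r ((2 : 𝕜)⁻¹ • (x + y)) := by
  have := map_sub_le_add r (x + y) y
  rw [add_sub_cancel_right] at this
  rw [map_midpoint]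
  linarith

theorem exists_forall_lt_of_unbounded {ι : Type*} (p : Seminorm 𝕜 X) (q : ι → Seminorm 𝕜 X)
    (s : Finset ι) (hunb : ∀ i ∈ s, ∀ C : ℝ, ∃ x, p x ≤ 1 ∧ C < q i x) (C : ι → ℝ) :
    ∃ x, p x ≤ 1 ∧ ∀ i ∈ s, C i < q i x := by
  classical
  induction s using Finset.induction_on generalizing C with
  | empty => exact ⟨0, by simp, by simp⟩
  | insert a s _ ih =>
    obtain ⟨y, hpy, hqy⟩ := hunb a (Finset.mem_insert_self a s) (3 * C a)
    obtain ⟨x, hpx, hqx⟩ :=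
      ih (fun i hi => hunb i (Finset.mem_insert_of_mem hi)) (fun i => C i + |C i| + q i y)
    by_cases hqax : C a < q a x
    · exact ⟨x, hpx, Finset.forall_mem_insert _ _ _ |>.2 ⟨hqax, fun i hi => by
        linarith [hqx i hi, apply_nonneg (q i) y, abs_nonneg (C i)]⟩⟩
    refine ⟨(2 : 𝕜)⁻¹ • (x + y), p.map_midpoint_le hpx hpy,
      Finset.forall_mem_insert _ _ _ |>.2 ⟨?_, fun i hi => ?_⟩⟩
    · have hmid := (q a).sub_le_two_mul_map_midpoint y x
      rw [add_comm y x] at hmid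
      linarith
    · linarith [(q i).sub_le_two_mul_map_midpoint x y, hqx i hi, le_abs_self (C i)]

end Seminorm

theorem stmt_8 {X : Type*} [AddCommGroup X] [Module ℝ X]
    (k : ℕ) (hk : 0 < k) (p : Seminorm ℝ X) (q : Fin k → Seminorm ℝ X)
    (hunb : ∀ i, ¬ ∃ C : ℝ, ∀ x : X, p x ≤ 1 → q i x ≤ C) :
    ¬ ∃ C : ℝ, ∀ x : X, p x ≤ 1 → (⨅ i, q i x) ≤ C := by
  have : Nonempty (Fin k) := ⟨⟨0, hk⟩⟩
  push Not at hunb ⊢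
  intro C
  obtain ⟨x, hpx, hqx⟩ :=
    p.exists_forall_lt_of_unbounded q Finset.univ (fun i _ => hunb i) fun _ => C
  obtain ⟨i, hi⟩ := exists_eq_ciInf_of_finite (f := fun i => q i x)
  exact ⟨x, hpx, hi ▸ hqx i (Finset.mem_univ i)⟩
end

section
/- If F is a free filter on ℕ which is both rapid⁺ and a P⁺-filter, then every Banach space X is F-barrelled; that is, for every F-barrel-system (B_i) in X there exists a 0-neighbourhood U in X and a set A ∈ F such that U ⊆ B_i for all i ∈ A. -/
/-- `F` is a P⁺-filter. -/
def PPlus (F : Filter ℕ) : Prop :=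
  ∀ A : ℕ → Set ℕ, (∀ k, FStat F (A k)) → Antitone A →
    ∃ B : Set ℕ, FStat F B ∧ ∀ k, (B \ A k).Finite

/-- A barrel: an absorbing, balanced, closed, convex set. -/
def IsBarrel {X : Type*} [AddCommGroup X] [Module ℝ X] [TopologicalSpace X]
    (B : Set X) : Prop :=
  Absorbent ℝ B ∧ Balanced ℝ B ∧ IsClosed B ∧ Convex ℝ B

/-! If no ball `B(0, δ)` lies in `F`-almost all barrels, the sets `Iₙ = {i | B(0, 8⁻ⁿ/6) ⊄ Bᵢ}`
are decreasing and `F`-stationary. The P⁺ and rapid⁺ properties then yield indices `bₙ ∈ Iₙ`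
that meet every member of `F` infinitely often. Hahn–Banach separates a short
vector from each barrel `B_{bₙ}` by a functional `gₙ`, and a gliding hump construction in the
Banach space produces one `x` with `2⁻ⁿ x ∉ B_{bₙ}` for all `n`. No multiple `t • x` can then lie
in `F`-almost all barrels, contradicting the barrel-system property. -/

open Filter Set Metric

section Combinatorics

variable {F : Filter ℕ}

theorem FStat.infinite_inter (hfree : F ≤ cofinite) {S A : Set ℕ} (hS : FStat F S)
    (hA : A ∈ F) : (A ∩ S).Infinite := fun hfin =>
  hS <| mem_of_superset (inter_mem hA (hfree hfin.compl_mem_cofinite))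
    fun _ ⟨hiA, hi⟩ hiS => hi ⟨hiA, hiS⟩

theorem exists_strictMono_lt (N : ℕ → ℕ) : ∃ f : ℕ → ℕ, StrictMono f ∧ ∀ n, N n < f n := by
  refine ⟨fun n => n + 1 + ∑ k ∈ Finset.range (n + 1), N k,
    strictMono_nat_of_lt_succ fun n => ?_, fun n => ?_⟩
  · simp only [Finset.sum_range_succ _ (n + 1)]
    omega
  · have := Finset.single_le_sum (fun k _ => Nat.zero_le (N k)) (Finset.self_mem_range_succ n)
    dsimp only
    omega

theorem exists_forall_mem_frequently_mem (hfree : F ≤ cofinite) (hrapid : RapidPlus F)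
    (hP : PPlus F) {I : ℕ → Set ℕ} (hI : ∀ n, FStat F (I n)) (hanti : Antitone I) :
    ∃ b : ℕ → ℕ, (∀ n, b n ∈ I n) ∧ ∀ A ∈ F, ∃ᶠ n in atTop, b n ∈ A := by
  obtain ⟨S, hS, hSI⟩ := hP I hI hanti
  choose N hN using fun n => (hSI n).bddAbove
  obtain ⟨f, hf, hNf⟩ := exists_strictMono_lt N
  obtain ⟨T, hTS, hT, hTf⟩ := hrapid S hS f hf
  have hTinf : T.Infinite := by simpa using hT.infinite_inter hfree univ_mem
  have hrange : range (Nat.nth (· ∈ T)) = T := Nat.range_nth_of_infinite hTinf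
  refine ⟨Nat.nth (· ∈ T), fun n => ?_, fun A hA => ?_⟩
  · by_contra hn
    have := hN n ⟨hTS (hrange.subset (mem_range_self n)), hn⟩
    linarith [hNf n, hTf n]
  · have := hT.infinite_inter hfree hA
    rw [← hrange, ← image_preimage_eq_inter_range] at this
    exact Nat.frequently_atTop_iff_infinite.2 (this.of_image _)

end Combinatorics

section Separation

variable {E : Type*} [AddCommGroup E] [Module ℝ E] [TopologicalSpace E] [IsTopologicalAddGroup E]
  [ContinuousSMul ℝ E] [LocallyConvexSpace ℝ E]

theorem Balanced.exists_abs_apply_lt_of_notMem {C : Set E} (hb : Balanced ℝ C)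
    (hc : Convex ℝ C) (hcl : IsClosed C) {w : E} (hw : w ∉ C) :
    ∃ g : StrongDual ℝ E, ∀ a ∈ C, |g a| < g w := by
  obtain ⟨g, u, hgu, hu⟩ := geometric_hahn_banach_closed_point hc hcl hw
  refine ⟨g, fun a ha => abs_lt.2 ⟨?_, (hgu a ha).trans hu⟩⟩
  have := hgu (-a) (hb.neg_mem_iff.2 ha)
  rw [map_neg] at this
  linarith

end Separation

section GlidingHump

variable {E : Type*} [NormedAddCommGroup E] [NormedSpace ℝ E]

theorem exists_norm_le_and_half_mul_norm_le_abs_apply_add (g : StrongDual ℝ E) (s : E) {r : ℝ}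
    (hr : 0 ≤ r) : ∃ z : E, ‖z‖ ≤ r ∧ r * ‖g‖ / 2 ≤ |g (s + z)| := by
  rcases eq_or_ne g 0 with rfl | hg
  · exact ⟨0, by simpa using hr, by simp⟩
  obtain ⟨v, hv, hgv⟩ := g.exists_lt_apply_of_lt_opNorm (half_lt_self (norm_pos_iff.2 hg))
  rw [Real.norm_eq_abs] at hgv
  have hnorm : ‖r • v‖ ≤ r := by
    rw [norm_smul, Real.norm_of_nonneg hr]
    exact mul_le_of_le_one_right hr hv.le
  -- `g (s + r v) - g (s - r v) = 2 r g v`, so one of the two values has modulus `≥ r |g v|`.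
  have hsum : 2 * (r * |g v|) ≤ |g (s + r • v)| + |g (s + -(r • v))| :=
    calc 2 * (r * |g v|) = |g (s + r • v) - g (s + -(r • v))| := by
          simp only [map_add, map_neg, map_smul, smul_eq_mul]
          rw [show g s + r * g v - (g s + -(r * g v)) = 2 * (r * g v) by ring, abs_mul,
            abs_mul, abs_two, abs_of_nonneg hr]
      _ ≤ _ := abs_sub _ _
  have hhalf : r * ‖g‖ / 2 ≤ r * |g v| := by
    rw [mul_div_assoc]
    exact mul_le_mul_of_nonneg_left hgv.le hr
  by_cases h : r * |g v| ≤ |g (s + r • v)|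
  · exact ⟨r • v, hnorm, hhalf.trans h⟩
  · exact ⟨-(r • v), by rwa [norm_neg], by linarith⟩

variable [CompleteSpace E]

theorem exists_forall_geometric_le_abs_apply (g : ℕ → StrongDual ℝ E) :
    ∃ x : E, ∀ n, (1 / 4 : ℝ) ^ n * ‖g n‖ / 6 ≤ |g n x| := by
  have hr : ∀ n, (0 : ℝ) ≤ (1 / 4) ^ n := fun n => by positivity
  choose z hz hgz using fun n s => exists_norm_le_and_half_mul_norm_le_abs_apply_add (g n) s (hr n)
  let s : ℕ → E := fun n => Nat.rec 0 (fun k sk => sk + z k sk) n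
  have hstep : ∀ n, dist (s n) (s (n + 1)) ≤ 1 * (1 / 4 : ℝ) ^ n := fun n => by
    rw [dist_eq_norm, one_mul, show s (n + 1) = s n + z n (s n) from rfl, sub_add_cancel_left,
      norm_neg]
    exact hz n (s n)
  obtain ⟨x, hx⟩ :=
    cauchySeq_tendsto_of_complete (cauchySeq_of_le_geometric _ _ (by norm_num) hstep)
  refine ⟨x, fun n => ?_⟩
  have htail : ‖s (n + 1) - x‖ ≤ (1 / 4 : ℝ) ^ n / 3 := by
    have := dist_le_of_le_geometric_of_tendsto _ 1 (by norm_num) hstep hx (n + 1)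
    rw [dist_eq_norm] at this
    convert this using 1
    ring
  have hgtail : |g n (s (n + 1) - x)| ≤ ‖g n‖ * ((1 / 4 : ℝ) ^ n / 3) :=
    ((g n).le_opNorm _).trans (mul_le_mul_of_nonneg_left htail (norm_nonneg _))
  -- The tail beyond step `n` moves `gₙ` by at most `4⁻ⁿ‖gₙ‖/3`, less than the hump `4⁻ⁿ‖gₙ‖/2`.
  have hhump := hgz n (s n)
  have := abs_sub_abs_le_abs_sub (g n (s (n + 1))) (g n x)
  rw [← map_sub] at this
  change (1 / 4 : ℝ) ^ n * ‖g n‖ / 2 ≤ |g n (s (n + 1))| at hhump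
  linarith

theorem exists_forall_half_pow_smul_notMem {C : ℕ → Set E} (hb : ∀ n, Balanced ℝ (C n))
    (hc : ∀ n, Convex ℝ (C n)) (hcl : ∀ n, IsClosed (C n)) {w : ℕ → E} (hw : ∀ n, w n ∉ C n)
    (hwn : ∀ n, ‖w n‖ ≤ (1 / 8 : ℝ) ^ n / 6) : ∃ x : E, ∀ n, (1 / 2 : ℝ) ^ n • x ∉ C n := by
  choose g hg using fun n => (hb n).exists_abs_apply_lt_of_notMem (hc n) (hcl n) (hw n)
  obtain ⟨x, hx⟩ := exists_forall_geometric_le_abs_apply g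
  refine ⟨x, fun n hmem => (hg n _ hmem).not_ge ?_⟩
  calc g n (w n) ≤ ‖g n‖ * ‖w n‖ := (le_abs_self _).trans ((g n).le_opNorm _)
    _ ≤ ‖g n‖ * ((1 / 8 : ℝ) ^ n / 6) := mul_le_mul_of_nonneg_left (hwn n) (norm_nonneg _)
    _ = (1 / 2 : ℝ) ^ n * ((1 / 4 : ℝ) ^ n * ‖g n‖ / 6) := by
      rw [show (1 / 8 : ℝ) = 1 / 2 * (1 / 4) by norm_num, mul_pow]
      ring
    _ ≤ (1 / 2 : ℝ) ^ n * |g n x| := mul_le_mul_of_nonneg_left (hx n) (by positivity)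
    _ = |g n ((1 / 2 : ℝ) ^ n • x)| := by
      rw [map_smul, smul_eq_mul, abs_mul, abs_of_nonneg (by positivity : (0 : ℝ) ≤ (1 / 2) ^ n)]

end GlidingHump

theorem stmt_9_general (F : Filter ℕ) (hfree : F ≤ Filter.cofinite)
    (hrapid : RapidPlus F) (hP : PPlus F)
    {X : Type*} [NormedAddCommGroup X] [NormedSpace ℝ X] [CompleteSpace X]
    (B : ℕ → Set X) (hbarrel : ∀ i, IsBarrel (B i))
    (hsys : ∀ x : X, ∃ t : ℝ, 0 < t ∧ {i | t • x ∈ B i} ∈ F) :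
    ∃ U ∈ nhds (0 : X), ∃ A ∈ F, ∀ i ∈ A, U ⊆ B i := by
  by_contra! hcon
  let σ : ℕ → ℝ := fun n => (1 / 8 : ℝ) ^ n / 6
  let I : ℕ → Set ℕ := fun n => {i | ¬ ball (0 : X) (σ n) ⊆ B i}
  have hI : ∀ n, FStat F (I n) := fun n hn =>
    let ⟨_, hi, hns⟩ := hcon _ (ball_mem_nhds 0 (by positivity)) _ hn
    hi hns
  have hanti : Antitone I := fun m n hmn _ hi hsub => hi <|
    (ball_subset_ball <| div_le_div_of_nonneg_right
      (pow_le_pow_of_le_one (by norm_num) (by norm_num) hmn) (by norm_num)).trans hsub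
  obtain ⟨b, hbI, hbF⟩ := exists_forall_mem_frequently_mem hfree hrapid hP hI hanti
  choose w hwσ hwB using fun n => not_subset.1 (hbI n)
  obtain ⟨x, hx⟩ := exists_forall_half_pow_smul_notMem (fun n => (hbarrel (b n)).2.1)
    (fun n => (hbarrel (b n)).2.2.2) (fun n => (hbarrel (b n)).2.2.1) hwB
    fun n => (mem_ball_zero_iff.1 (hwσ n)).le
  obtain ⟨t, ht, hA⟩ := hsys x
  have hsmall : ∀ᶠ n in atTop, (1 / 2 : ℝ) ^ n ≤ t :=
    (tendsto_pow_atTop_nhds_zero_of_lt_one (by norm_num) (by norm_num)).eventually (ge_mem_nhds ht)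
  obtain ⟨n, htx, hle⟩ := ((hbF _ hA).and_eventually hsmall).exists
  refine hx n ((hbarrel (b n)).2.1.smul_mem_mono htx ?_)
  rwa [Real.norm_of_nonneg (by positivity), Real.norm_of_nonneg ht.le]

theorem stmt_9 (F : Filter ℕ) (hfree : F ≤ Filter.cofinite) [F.NeBot]
    (hrapid : RapidPlus F) (hP : PPlus F)
    {X : Type*} [NormedAddCommGroup X] [NormedSpace ℝ X] [CompleteSpace X]
    (B : ℕ → Set X) (hbarrel : ∀ i, IsBarrel (B i))
    (hsys : ∀ x : X, ∃ t : ℝ, 0 < t ∧ {i | t • x ∈ B i} ∈ F) :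
    ∃ U ∈ nhds (0 : X), ∃ A ∈ F, ∀ i ∈ A, U ⊆ B i :=
  stmt_9_general F hfree hrapid hP B hbarrel hsys
end

section
/- Let X and Y be topological vector spaces with X F-barrelled (F a filter on ℕ) and Y locally convex. Then every pointwise F-bounded sequence (T_i) of continuous linear maps from X to Y is F-equicontinuous. -/
/-- `X` is `F`-barrelled. -/
def FBarrelled (F : Filter ℕ) (X : Type*) [AddCommGroup X] [Module ℝ X]
    [TopologicalSpace X] : Prop :=
  ∀ B : ℕ → Set X, (∀ i, IsBarrel (B i)) →
    (∀ x : X, ∃ t : ℝ, 0 < t ∧ {i | t • x ∈ B i} ∈ F) →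
    ∃ U ∈ nhds (0 : X), {i | U ⊆ B i} ∈ F

/-
Pull a closed absolutely convex neighbourhood `B ⊆ V` of `0` in `Y` back along the `T i`.
The preimages `T i ⁻¹' B` form an `F`-barrel-system exactly because `(T i)` is pointwise
`F`-bounded, so `F`-barrelledness yields a single neighbourhood `U` of `0` inside
`T i ⁻¹' B` for `F`-many `i`.
-/

open Filter Topology

lemma Absorbent.mulActionHom_preimage {G₀ α β : Type*} [GroupWithZero G₀] [Bornology G₀]
    [MulAction G₀ α] [MulAction G₀ β] {s : Set β} (hs : Absorbent G₀ s) (f : α →[G₀] β) :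
    Absorbent G₀ (f ⁻¹' s) :=
  absorbent_iff_inv_smul.2 fun x ↦
    (absorbent_iff_inv_smul.1 hs (f x)).mono fun c hc ↦ by
      rwa [Set.mem_preimage, map_smul]

lemma IsBarrel.preimage {X Y : Type*} [AddCommGroup X] [Module ℝ X] [TopologicalSpace X]
    [AddCommGroup Y] [Module ℝ Y] [TopologicalSpace Y] {B : Set Y} (hB : IsBarrel B)
    (f : X →L[ℝ] Y) : IsBarrel (f ⁻¹' B) :=
  let ⟨hAbs, hBal, hClosed, hConv⟩ := hB
  ⟨hAbs.mulActionHom_preimage f.toLinearMap.toMulActionHom,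
    hBal.mulActionHom_preimage f.toLinearMap.toMulActionHom,
    hClosed.preimage f.continuous, hConv.linear_preimage f.toLinearMap⟩

lemma exists_isBarrel_mem_nhds_zero_subset {Y : Type*} [AddCommGroup Y] [Module ℝ Y]
    [TopologicalSpace Y] [IsTopologicalAddGroup Y] [ContinuousSMul ℝ Y]
    [LocallyConvexSpace ℝ Y] {V : Set Y} (hV : V ∈ 𝓝 (0 : Y)) :
    ∃ B ∈ 𝓝 (0 : Y), IsBarrel B ∧ B ⊆ V := by
  obtain ⟨B, ⟨hB0, hClosed, hBal, hConv⟩, hBV⟩ :=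
    (nhds_hasBasis_absConvex_closed ℝ Y).mem_iff.mp hV
  exact ⟨B, hB0, ⟨absorbent_nhds_zero hB0, hBal, hClosed, hConv⟩, hBV⟩

theorem stmt_10_general (F : Filter ℕ)
    {X Y : Type*} [AddCommGroup X] [Module ℝ X] [TopologicalSpace X]
    [AddCommGroup Y] [Module ℝ Y] [TopologicalSpace Y]
    [IsTopologicalAddGroup Y] [ContinuousSMul ℝ Y] [LocallyConvexSpace ℝ Y]
    (hX : FBarrelled F X)
    (T : ℕ → X →L[ℝ] Y)
    (hpb : ∀ x : X, ∀ V ∈ nhds (0 : Y), ∃ t : ℝ, 0 < t ∧ {i | t • T i x ∈ V} ∈ F) :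
    ∀ V ∈ nhds (0 : Y), ∃ U ∈ nhds (0 : X), {i | ∀ x ∈ U, T i x ∈ V} ∈ F := by
  intro V hV
  obtain ⟨B, hB0, hB, hBV⟩ := exists_isBarrel_mem_nhds_zero_subset hV
  have hSystem : ∀ x : X, ∃ t : ℝ, 0 < t ∧ {i | t • x ∈ T i ⁻¹' B} ∈ F := fun x ↦ by
    simpa only [Set.mem_preimage, map_smul] using hpb x B hB0
  obtain ⟨U, hU0, hUF⟩ := hX (fun i ↦ T i ⁻¹' B) (fun i ↦ hB.preimage (T i)) hSystem
  exact ⟨U, hU0, mem_of_superset hUF fun i hi x hx ↦ hBV (hi hx)⟩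

theorem stmt_10 (F : Filter ℕ)
    {X Y : Type*} [AddCommGroup X] [Module ℝ X] [TopologicalSpace X]
    [IsTopologicalAddGroup X] [ContinuousSMul ℝ X]
    [AddCommGroup Y] [Module ℝ Y] [TopologicalSpace Y]
    [IsTopologicalAddGroup Y] [ContinuousSMul ℝ Y] [LocallyConvexSpace ℝ Y]
    (hX : FBarrelled F X)
    (T : ℕ → X →L[ℝ] Y)
    (hpb : ∀ x : X, ∀ V ∈ nhds (0 : Y), ∃ t : ℝ, 0 < t ∧ {i | t • T i x ∈ V} ∈ F) :
    ∀ V ∈ nhds (0 : Y), ∃ U ∈ nhds (0 : X), {i | ∀ x ∈ U, T i x ∈ V} ∈ F :=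
  stmt_10_general F hX T hpb
end

section
/- Let X be an infinite-dimensional metrizable locally convex topological vector space which is not normable, and let F be a free filter on ℕ. If every pointwise F-bounded sequence of continuous linear functionals on X is F-equicontinuous, then F is a P⁺-filter. -/
/-!
If `F` is not a P⁺-filter, there is a decreasing sequence of `F`-stationary sets `Aₖ` such that
no stationary set is almost contained in all of them. Fix a decreasing basis `Uₖ` of
neighbourhoods of `0`. Since `X` is not normable, no `Uₖ` is bounded, so Hahn–Banach gives
functionals `g k m` that are `≤ 1/(m+1)` on a fixed neighbourhood `Vₖ` but exceed `1` at a point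
of `Uₖ`. Let `φₙ := g (depth n) n`, where `depth n` is the largest `k ≤ n` with `n ∈ Aₖ`. For
fixed `x` only finitely many `n` of each depth have `|φₙ x| > 1`, so this set is almost contained
in every `Aₖ`, hence not stationary: `(φₙ)` is pointwise `F`-bounded. It is not
`F`-equicontinuous, because each stationary `Aₖ` meets every member of `F` in arbitrarily large
`n`, where `φₙ > 1` somewhere on `Uₖ`.
-/

open Filter Set Topology Pointwise

section Depth

open Classical in
noncomputable def depth (A : ℕ → Set ℕ) (n : ℕ) : ℕ := Nat.findGreatest (fun k => n ∈ A k) n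

variable {A : ℕ → Set ℕ} {k n : ℕ}

lemma le_depth (hk : k ≤ n) (hn : n ∈ A k) : k ≤ depth A n := by
  classical
  exact Nat.le_findGreatest hk hn

lemma mem_depth (hk : k ≤ n) (hn : n ∈ A k) : n ∈ A (depth A n) := by
  classical
  exact Nat.findGreatest_spec (P := fun k => n ∈ A k) hk hn

lemma finite_diff_of_finite_fibers (hA : Antitone A) {B : Set ℕ} {d : ℕ → ℕ}
    (hB : ∀ n ∈ B, n ∈ A (d n)) (hfin : ∀ j, (B ∩ d ⁻¹' {j}).Finite) (k : ℕ) :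
    (B \ A k).Finite := by
  refine ((finite_Iio k).biUnion fun j _ => hfin j).subset ?_
  rintro n ⟨hnB, hnk⟩
  have hdk : d n < k := lt_of_not_ge fun hkd => hnk (hA hkd (hB n hnB))
  exact mem_biUnion hdk ⟨hnB, rfl⟩

end Depth

section Functionals

variable {X : Type*} [AddCommGroup X] [Module ℝ X] [TopologicalSpace X] [ContinuousSMul ℝ X]

lemma tendsto_clm_apply_zero_of_abs_le {V : Set X} (hV : V ∈ 𝓝 0) {g : ℕ → X →L[ℝ] ℝ}
    {ε : ℕ → ℝ} (hε : Tendsto ε atTop (𝓝 0)) (hgV : ∀ m, ∀ u ∈ V, |g m u| ≤ ε m) (x : X) :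
    Tendsto (fun m => g m x) atTop (𝓝 0) := by
  obtain ⟨t, htx, ht⟩ := (((absorbent_nhds_zero (𝕜 := ℝ) hV).eventually_nhdsNE_zero x).and
    self_mem_nhdsWithin).exists
  have ht' : 0 < |t| := abs_pos.2 ht
  refine squeeze_zero_norm (a := fun m => |t|⁻¹ * ε m) (fun m => ?_)
    (by simpa using hε.const_mul |t|⁻¹)
  rw [Real.norm_eq_abs, le_inv_mul_iff₀ ht', ← abs_mul, ← smul_eq_mul, ← map_smul]
  exact hgV m _ htx

variable [IsTopologicalAddGroup X]

lemma exists_clm_one_lt_of_not_absorbs {B S : Set X} (hB₀ : (0 : X) ∈ B) (hBo : IsOpen B)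
    (hBb : Balanced ℝ B) (hBc : Convex ℝ B) (hS : ¬ Absorbs ℝ B S) {ε : ℝ} (hε : 0 < ε) :
    ∃ g : X →L[ℝ] ℝ, ∃ y ∈ S, 1 < g y ∧ ∀ u ∈ B, |g u| ≤ ε := by
  set r := 2 / ε
  have hr : 0 < r := by positivity
  obtain ⟨y, hyS, hyr⟩ : ∃ y ∈ S, y ∉ r • B := by
    by_contra! h
    exact hS <| absorbs_iff_norm.2 ⟨r, fun c hc => fun y hy =>
      hBb.smul_mono (by rwa [Real.norm_of_nonneg hr.le]) (h y hy)⟩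
  obtain ⟨f, hf⟩ := geometric_hahn_banach_open_point (hBc.smul r) (hBo.smul₀ hr.ne') hyr
  have hfB : ∀ u ∈ B, r * |f u| < f y := by
    intro u hu
    have h₁ := hf _ (smul_mem_smul_set hu)
    have h₂ := hf _ (smul_mem_smul_set (hBb.neg_mem_iff.2 hu))
    simp only [map_smul, map_neg, smul_eq_mul] at h₁ h₂
    have := abs_lt.2 ⟨by linarith, h₁⟩
    rwa [abs_mul, abs_of_pos hr] at this
  have hfy : 0 < f y := by simpa using hfB 0 hB₀
  refine ⟨(2 / f y) • f, y, hyS, by simp [hfy.ne'], fun u hu => ?_⟩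
  have hfu : |f u| ≤ f y / r := ((lt_div_iff₀ hr).2 (by linarith [hfB u hu])).le
  calc |((2 / f y) • f) u| = 2 / f y * |f u| := by
        rw [smul_apply, smul_eq_mul, abs_mul, abs_of_pos (by positivity)]
    _ ≤ 2 / f y * (f y / r) := by gcongr
    _ = ε := by simp only [r]; field_simp

lemma exists_nhds_clm_one_lt_of_not_isVonNBounded [LocallyConvexSpace ℝ X] {S : Set X}
    (hS : ¬ Bornology.IsVonNBounded ℝ S) :
    ∃ V ∈ 𝓝 (0 : X), ∀ ε > 0, ∃ g : X →L[ℝ] ℝ, ∃ y ∈ S, 1 < g y ∧ ∀ u ∈ V, |g u| ≤ ε := by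
  obtain ⟨W, hW, hWS⟩ : ∃ W ∈ 𝓝 (0 : X), ¬ Absorbs ℝ W S := by
    simpa [Bornology.IsVonNBounded] using hS
  obtain ⟨B, ⟨hB₀, hBo, hBb, hBc⟩, hBW⟩ := (nhds_hasBasis_absConvex_open ℝ X).mem_iff.1 hW
  exact ⟨B, hBo.mem_nhds hB₀, fun ε hε => exists_clm_one_lt_of_not_absorbs hB₀ hBo hBb hBc
    (fun h => hWS (h.mono_left hBW)) hε⟩

end Functionals

section Diagonal

variable {X : Type*} [AddCommGroup X] [Module ℝ X] [TopologicalSpace X]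

open Classical in
/-- `depth A n = 0` also when `n` lies in no `A k`; such `n` get the zero functional. -/
noncomputable def diagonalSeq (A : ℕ → Set ℕ) (g : ℕ → ℕ → X →L[ℝ] ℝ) (n : ℕ) : X →L[ℝ] ℝ :=
  if n ∈ A (depth A n) then g (depth A n) n else 0

variable {A : ℕ → Set ℕ} {g : ℕ → ℕ → X →L[ℝ] ℝ}

lemma finite_diff_setOf_one_lt_abs_diagonalSeq (hA : Antitone A)
    (hg : ∀ k x, Tendsto (fun m => g k m x) atTop (𝓝 0)) (x : X) (k : ℕ) :
    ({n | 1 < |diagonalSeq A g n x|} \ A k).Finite := by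
  have hmem : ∀ n ∈ {n | 1 < |diagonalSeq A g n x|}, n ∈ A (depth A n) := by
    intro n hn
    by_contra h
    norm_num [diagonalSeq, h] at hn
  refine finite_diff_of_finite_fibers hA hmem (fun j => ?_) k
  have hfin : {m | 1 < |g j m x|}.Finite := by
    have := (hg j x).norm.eventually (gt_mem_nhds (norm_zero.trans_lt one_pos))
    rw [← Nat.cofinite_eq_atTop, eventually_cofinite] at this
    exact this.subset fun m hm => by simpa using hm.le
  refine hfin.subset ?_
  rintro n ⟨hn, rfl⟩
  simpa [diagonalSeq, hmem n hn] using hn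

lemma exists_one_lt_abs_diagonalSeq {F : Filter ℕ} (hfree : F ≤ cofinite)
    (hstat : ∀ k, FStat F (A k)) {U : ℕ → Set X} (hU : (𝓝 0).HasAntitoneBasis U)
    {y : ℕ → ℕ → X} (hyU : ∀ k m, y k m ∈ U k) (hgy : ∀ k m, 1 < g k m (y k m))
    {W : Set X} (hW : W ∈ 𝓝 0) {A' : Set ℕ} (hA' : A' ∈ F) :
    ∃ x ∈ W, ∃ n ∈ A', 1 < |diagonalSeq A g n x| := by
  obtain ⟨K, hKW⟩ := hU.mem_iff.1 hW
  have hlarge : Ici K ∈ F := hfree (by rw [Nat.cofinite_eq_atTop]; exact Ici_mem_atTop K)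
  obtain ⟨n, ⟨hnA', hKn⟩, hnK⟩ : (A' ∩ Ici K ∩ A K).Nonempty := by
    by_contra! h
    exact hstat K (mem_of_superset (inter_mem hA' hlarge) fun n hn hnK =>
      h.subset ⟨hn, hnK⟩)
  refine ⟨y (depth A n) n, hKW (hU.antitone (le_depth hKn hnK) (hyU _ _)), n, hnA', ?_⟩
  simpa [diagonalSeq, mem_depth hKn hnK] using (hgy _ _).trans_le (le_abs_self _)

end Diagonal

theorem stmt_11_general (F : Filter ℕ) (hfree : F ≤ Filter.cofinite)
    {X : Type*} [AddCommGroup X] [Module ℝ X] [TopologicalSpace X]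
    [IsTopologicalAddGroup X] [ContinuousSMul ℝ X] [LocallyConvexSpace ℝ X]
    [TopologicalSpace.MetrizableSpace X]
    (hnotnorm : ∀ U ∈ nhds (0 : X), ¬ Bornology.IsVonNBounded ℝ U)
    (hubp : ∀ φ : ℕ → X →L[ℝ] ℝ,
      (∀ x : X, ∃ C : ℝ, 0 < C ∧ {n | |φ n x| ≤ C} ∈ F) →
      ∃ U ∈ nhds (0 : X), ∃ A ∈ F, ∀ x ∈ U, ∀ n ∈ A, |φ n x| ≤ 1) :
    PPlus F := by
  by_contra hP
  obtain ⟨A, hstat, hA, hbad⟩ : ∃ A : ℕ → Set ℕ, (∀ k, FStat F (A k)) ∧ Antitone A ∧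
      ∀ B, FStat F B → ∃ k, ¬ (B \ A k).Finite := by
    simpa [PPlus] using hP
  obtain ⟨U, hU⟩ := (𝓝 (0 : X)).exists_antitone_basis
  choose V hV hsep using fun k =>
    exists_nhds_clm_one_lt_of_not_isVonNBounded (hnotnorm _ (hU.mem k))
  choose g y hyU hgy hgV using fun k (m : ℕ) => hsep k (1 / (m + 1)) Nat.one_div_pos_of_nat
  have hg : ∀ k x, Tendsto (fun m => g k m x) atTop (𝓝 0) := fun k =>
    tendsto_clm_apply_zero_of_abs_le (hV k) tendsto_one_div_add_atTop_nhds_zero_nat (hgV k)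
  have hbdd : ∀ x, ∃ C : ℝ, 0 < C ∧ {n | |diagonalSeq A g n x| ≤ C} ∈ F := by
    refine fun x => ⟨1, one_pos, ?_⟩
    by_contra h
    obtain ⟨k, hk⟩ := hbad {n | 1 < |diagonalSeq A g n x|} <| by
      simpa [FStat, compl_ofPred] using h
    exact hk (finite_diff_setOf_one_lt_abs_diagonalSeq hA hg x k)
  obtain ⟨W, hW, A', hA', hle⟩ := hubp _ hbdd
  obtain ⟨x, hx, n, hn, hlt⟩ := exists_one_lt_abs_diagonalSeq hfree hstat hU hyU hgy hW hA'
  exact (hle x hx n hn).not_gt hlt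

theorem stmt_11 (F : Filter ℕ) (hfree : F ≤ Filter.cofinite) [F.NeBot]
    {X : Type*} [AddCommGroup X] [Module ℝ X] [TopologicalSpace X]
    [IsTopologicalAddGroup X] [ContinuousSMul ℝ X] [LocallyConvexSpace ℝ X]
    [TopologicalSpace.MetrizableSpace X]
    (hinf : ¬ FiniteDimensional ℝ X)
    (hnotnorm : ∀ U ∈ nhds (0 : X), ¬ Bornology.IsVonNBounded ℝ U)
    (hubp : ∀ φ : ℕ → X →L[ℝ] ℝ,
      (∀ x : X, ∃ C : ℝ, 0 < C ∧ {n | |φ n x| ≤ C} ∈ F) →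
      ∃ U ∈ nhds (0 : X), ∃ A ∈ F, ∀ x ∈ U, ∀ n ∈ A, |φ n x| ≤ 1) :
    PPlus F :=
  stmt_11_general F hfree hnotnorm hubp
end

section
/- Let X be a normed space, F a free filter on ℕ, I an F-stationary subset of ℕ, ε > 0, and (I_n) an increasing interval-partition of I with respect to which F is slow. If the dual X' contains a sequence (φ_n)_{n∈I} that is ε-almost-euclidean on (I_n), then X' contains a pointwise F-bounded sequence (ψ_n) which is not bounded in norm on any infinite subset of I. -/
open Finset Real

section AlmostEuclidean

variable {ι : Type*} {s : Finset ι}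

theorem one_le_norm_of_sum_sq_le {E : Type*} [NormedAddCommGroup E] [NormedSpace ℝ E]
    {φ : ι → E} (h : ∀ a : ι → ℝ, ∑ j ∈ s, a j ^ 2 ≤ ‖∑ j ∈ s, a j • φ j‖ ^ 2)
    {i : ι} (hi : i ∈ s) : 1 ≤ ‖φ i‖ := by
  classical
  have h1 := h fun j => if j = i then 1 else 0
  simp only [ite_pow, one_pow, ne_eq, OfNat.ofNat_ne_zero, not_false_eq_true, zero_pow, ite_smul,
    one_smul, zero_smul, sum_ite_eq', if_pos hi] at h1
  nlinarith [norm_nonneg (φ i)]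

theorem sum_sq_apply_le {X : Type*} [NormedAddCommGroup X] [NormedSpace ℝ X]
    {φ : ι → X →L[ℝ] ℝ} {K : ℝ} (hK : 0 ≤ K)
    (h : ∀ a : ι → ℝ, ‖∑ j ∈ s, a j • φ j‖ ^ 2 ≤ K * ∑ j ∈ s, a j ^ 2) (x : X) :
    ∑ j ∈ s, φ j x ^ 2 ≤ K * ‖x‖ ^ 2 := by
  set S := ∑ j ∈ s, φ j x ^ 2
  set T := ∑ j ∈ s, φ j x • φ j
  have hTx : T x = S := by simp [T, S, sq]
  have hS : S ≤ ‖T‖ * ‖x‖ := hTx ▸ (le_abs_self _).trans (T.le_opNorm x)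
  have hS0 : 0 ≤ S := sum_nonneg fun j _ => sq_nonneg (φ j x)
  rcases hS0.eq_or_lt with hS0 | hS0
  · rw [← hS0]
    positivity
  · have hsq : S * S ≤ K * ‖x‖ ^ 2 * S := by
      nlinarith [mul_le_mul hS hS hS0.le (by positivity), h fun j => φ j x]
    exact le_of_mul_le_mul_right hsq hS0

theorem card_filter_lt_mul_sq_le {f : ι → ℝ} {r : ℝ} (hf : ∑ j ∈ s, f j ^ 2 ≤ r ^ 2) (n : ℕ) :
    #{j ∈ s | r ^ 2 < n * f j ^ 2} ≤ n := by
  set t := {j ∈ s | r ^ 2 < n * f j ^ 2}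
  by_contra! hn
  have ht : t.Nonempty := card_pos.mp (n.zero_le.trans_lt hn)
  have hlt : (#t : ℝ) * r ^ 2 < n * r ^ 2 :=
    calc (#t : ℝ) * r ^ 2 = ∑ _j ∈ t, r ^ 2 := by rw [sum_const, nsmul_eq_mul]
      _ < ∑ j ∈ t, n * f j ^ 2 := sum_lt_sum_of_nonempty ht fun j hj => (mem_filter.mp hj).2
      _ ≤ n * ∑ j ∈ s, f j ^ 2 := by
        rw [← mul_sum]
        exact mul_le_mul_of_nonneg_left
          (sum_le_sum_of_subset_of_nonneg (filter_subset _ _) fun j _ _ => sq_nonneg _) n.cast_nonneg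
      _ ≤ n * r ^ 2 := by gcongr
  exact absurd (lt_of_mul_lt_mul_right hlt (sq_nonneg r)) (by exact_mod_cast hn.not_gt)

end AlmostEuclidean

/-- Junk value `0` when `j` lies in no block. -/
noncomputable def blockIndex (J : ℕ → Set ℕ) (j : ℕ) : ℕ := sInf {n | j ∈ J n}

namespace IncIntervalPartition

variable {I : Set ℕ} {J : ℕ → Set ℕ} {j n : ℕ}

theorem eq_of_mem (hJ : IncIntervalPartition I J) {m : ℕ} (hn : j ∈ J n) (hm : j ∈ J m) :
    n = m := by
  rcases lt_trichotomy n m with h | h | h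
  · exact absurd (hJ.2.2.2 n m h j hn j hm) (lt_irrefl j)
  · exact h
  · exact absurd (hJ.2.2.2 m n h j hm j hn) (lt_irrefl j)

theorem blockIndex_eq (hJ : IncIntervalPartition I J) (hj : j ∈ J n) : blockIndex J j = n :=
  hJ.eq_of_mem (Nat.sInf_mem (s := {n | j ∈ J n}) ⟨n, hj⟩) hj

theorem mem_blockIndex (hJ : IncIntervalPartition I J) (hj : j ∈ I) : j ∈ J (blockIndex J j) := by
  rw [← hJ.2.2.1, Set.mem_iUnion] at hj
  obtain ⟨n, hn⟩ := hj
  rwa [hJ.blockIndex_eq hn]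

theorem blockIndex_eq_zero (hJ : IncIntervalPartition I J) (hj : j ∉ I) : blockIndex J j = 0 := by
  refine Nat.sInf_eq_zero.mpr (Or.inr (Set.eq_empty_of_forall_notMem fun n hn => hj ?_))
  rw [← hJ.2.2.1]
  exact Set.mem_iUnion_of_mem n hn

theorem finite_setOf_blockIndex_le (hJ : IncIntervalPartition I J) (hJfin : ∀ n, (J n).Finite)
    (N : ℕ) : {j | j ∈ I ∧ blockIndex J j ≤ N}.Finite :=
  ((Set.finite_Iic N).biUnion fun n _ => hJfin n).subset fun _ ⟨hj, hjN⟩ =>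
    Set.mem_biUnion (Set.mem_Iic.mpr hjN) (hJ.mem_blockIndex hj)

end IncIntervalPartition

theorem SlowWrt.compl_mem {F : Filter ℕ} {I A : Set ℕ} {J : ℕ → Set ℕ} (hslow : SlowWrt F I J)
    (hA : A ⊆ I) (hcount : ∀ n, (A ∩ J n).ncard ≤ n) : Aᶜ ∈ F := by
  by_contra hAc
  obtain ⟨n, hn⟩ := hslow A hA hAc
  exact (hcount n).not_gt hn

noncomputable def blockScaled {E : Type*} [NormedAddCommGroup E] [NormedSpace ℝ E]
    (J : ℕ → Set ℕ) (φ : ℕ → E) (j : ℕ) : E :=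
  √(blockIndex J j : ℝ) • φ j

section BlockScaled

variable {X : Type*} [NormedAddCommGroup X] [NormedSpace ℝ X] {I : Set ℕ} {J : ℕ → Set ℕ}
  (hJ : IncIntervalPartition I J) (hJfin : ∀ n, (J n).Finite) {φ : ℕ → X →L[ℝ] ℝ}
include hJ hJfin

theorem pointwise_bounded_blockScaled {F : Filter ℕ} (hslow : SlowWrt F I J) {K : ℝ} (hK : 0 ≤ K)
    (hupper : ∀ n, ∀ a : ℕ → ℝ,
      ‖∑ j ∈ (hJfin n).toFinset, a j • φ j‖ ^ 2 ≤ K * ∑ j ∈ (hJfin n).toFinset, a j ^ 2)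
    (x : X) : ∃ r : ℝ, {j | |blockScaled J φ j x| ≤ r} ∈ F := by
  set r := √(K * ‖x‖ ^ 2)
  have hr : r ^ 2 = K * ‖x‖ ^ 2 := sq_sqrt (by positivity)
  refine ⟨r, ?_⟩
  set A := {j | r < |blockScaled J φ j x|}
  have hAc : {j | |blockScaled J φ j x| ≤ r} = Aᶜ := by ext; simp [A]
  rw [hAc]
  refine hslow.compl_mem (fun j hjA => ?_) fun n => ?_
  · by_contra hj
    have hjA' : r < |blockScaled J φ j x| := hjA
    simp [blockScaled, hJ.blockIndex_eq_zero hj] at hjA'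
    exact hjA'.not_ge (sqrt_nonneg _)
  · have hsub : A ∩ J n ⊆ ↑{j ∈ (hJfin n).toFinset | r ^ 2 < n * φ j x ^ 2} := by
      rintro j ⟨hjA, hjn⟩
      have hjA' : r < |√(n : ℝ) * φ j x| := by
        simpa [A, blockScaled, hJ.blockIndex_eq hjn] using hjA
      have hsq : r ^ 2 < (√(n : ℝ) * φ j x) ^ 2 :=
        sq_lt_sq.mpr (by rwa [abs_of_nonneg (sqrt_nonneg _)])
      rw [mul_pow, sq_sqrt n.cast_nonneg] at hsq
      simpa using ⟨hjn, hsq⟩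
    calc (A ∩ J n).ncard ≤ (↑{j ∈ (hJfin n).toFinset | r ^ 2 < n * φ j x ^ 2} : Set ℕ).ncard :=
          Set.ncard_le_ncard hsub (Finset.finite_toSet _)
      _ ≤ n := by
        rw [Set.ncard_coe_finset]
        exact card_filter_lt_mul_sq_le (hr ▸ sum_sq_apply_le hK (hupper n) x) n

theorem not_bddAbove_norm_blockScaled
    (hlower : ∀ n, ∀ a : ℕ → ℝ,
      ∑ j ∈ (hJfin n).toFinset, a j ^ 2 ≤ ‖∑ j ∈ (hJfin n).toFinset, a j • φ j‖ ^ 2)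
    {S : Set ℕ} (hSI : S ⊆ I) (hS : S.Infinite) : ¬ ∃ C : ℝ, ∀ j ∈ S, ‖blockScaled J φ j‖ ≤ C := by
  rintro ⟨C, hC⟩
  refine hS ((hJ.finite_setOf_blockIndex_le hJfin ⌈C ^ 2⌉₊).subset fun j hj => ⟨hSI hj, ?_⟩)
  have hφ : 1 ≤ ‖φ j‖ :=
    one_le_norm_of_sum_sq_le (hlower _) ((hJfin _).mem_toFinset.mpr (hJ.mem_blockIndex (hSI hj)))
  have hsqrt : √(blockIndex J j : ℝ) ≤ C :=
    calc √(blockIndex J j : ℝ) ≤ √(blockIndex J j : ℝ) * ‖φ j‖ :=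
          le_mul_of_one_le_right (sqrt_nonneg _) hφ
      _ = ‖blockScaled J φ j‖ := by
        rw [blockScaled, norm_smul, norm_of_nonneg (sqrt_nonneg _)]
      _ ≤ C := hC j hj
  exact_mod_cast (sqrt_le_iff.mp hsqrt).2.trans (Nat.le_ceil _)

end BlockScaled

theorem stmt_14_general (F : Filter ℕ)
    {X : Type*} [NormedAddCommGroup X] [NormedSpace ℝ X]
    (I : Set ℕ) (ε : ℝ) (hε : 0 < ε)
    (J : ℕ → Set ℕ) (hJ : IncIntervalPartition I J)
    (hJfin : ∀ n, (J n).Finite)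
    (hslow : SlowWrt F I J)
    (φ : ℕ → X →L[ℝ] ℝ)
    (heucl : ∀ n : ℕ, ∀ a : ℕ → ℝ,
      (∑ j ∈ (hJfin n).toFinset, (a j) ^ 2) ≤
          ‖∑ j ∈ (hJfin n).toFinset, a j • φ j‖ ^ 2 ∧
        ‖∑ j ∈ (hJfin n).toFinset, a j • φ j‖ ^ 2 ≤
          (1 + ε) * ∑ j ∈ (hJfin n).toFinset, (a j) ^ 2) :
    ∃ ψ : ℕ → X →L[ℝ] ℝ,
      (∀ x : X, ∃ r : ℝ, {n | |ψ n x| ≤ r} ∈ F) ∧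
      ∀ S ⊆ I, S.Infinite → ¬ ∃ C : ℝ, ∀ n ∈ S, ‖ψ n‖ ≤ C :=
  ⟨blockScaled J φ,
    pointwise_bounded_blockScaled hJ hJfin hslow (by linarith) fun n a => (heucl n a).2,
    fun _ hSI hS => not_bddAbove_norm_blockScaled hJ hJfin (fun n a => (heucl n a).1) hSI hS⟩

theorem stmt_14 (F : Filter ℕ) (hfree : F ≤ Filter.cofinite) [F.NeBot]
    {X : Type*} [NormedAddCommGroup X] [NormedSpace ℝ X]
    (I : Set ℕ) (hI : FStat F I) (ε : ℝ) (hε : 0 < ε)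
    (J : ℕ → Set ℕ) (hJ : IncIntervalPartition I J)
    (hJfin : ∀ n, (J n).Finite)
    (hslow : SlowWrt F I J)
    (φ : ℕ → X →L[ℝ] ℝ)
    (heucl : ∀ n : ℕ, ∀ a : ℕ → ℝ,
      (∑ j ∈ (hJfin n).toFinset, (a j) ^ 2) ≤
          ‖∑ j ∈ (hJfin n).toFinset, a j • φ j‖ ^ 2 ∧
        ‖∑ j ∈ (hJfin n).toFinset, a j • φ j‖ ^ 2 ≤
          (1 + ε) * ∑ j ∈ (hJfin n).toFinset, (a j) ^ 2) :
    ∃ ψ : ℕ → X →L[ℝ] ℝ,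
      (∀ x : X, ∃ r : ℝ, {n | |ψ n x| ≤ r} ∈ F) ∧
      ∀ S ⊆ I, S.Infinite → ¬ ∃ C : ℝ, ∀ n ∈ S, ‖ψ n‖ ≤ C :=
  stmt_14_general F I ε hε J hJ hJfin hslow φ heucl
end

section
/- A free ultrafilter U on ℕ is semi-selective (i.e., both rapid⁺ and a P-point) if and only if for every sequence (A_k) of elements of U there exists a set {a₀ < a₁ < a₂ < ...} ∈ U with a_k ∈ A_k for every k. -/
/-- An ultrafilter `U` is a P-point: every decreasing sequence of elements of `U`
has a pseudo-intersection in `U`. -/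
def IsPPoint (U : Ultrafilter ℕ) : Prop :=
  ∀ A : ℕ → Set ℕ, (∀ k, A k ∈ U) → Antitone A →
    ∃ B ∈ U, ∀ k, (B \ A k).Finite

/-- An ultrafilter `U` is rapid⁺: for every strictly increasing `f` there is
`B ∈ U` whose enumerating function dominates `f`. -/
def IsRapid (U : Ultrafilter ℕ) : Prop :=
  ∀ f : ℕ → ℕ, StrictMono f → ∃ B ∈ U, ∀ n, f n ≤ Nat.nth (· ∈ B) n

/-! A P-point gives one `B ∈ U` and thresholds `m k` beyond which `B` lies inside `A k`; rapidity
gives `C ∈ U` whose `k`-th element is at least `m k`, so the `k`-th element of `C ∩ B` lies in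
`A k`. Conversely, selectors for the sets `[f k, ∞)` witness rapidity, and a selector for a
decreasing sequence is a pseudo-intersection of it. -/

open Filter

def HasSelectors (U : Ultrafilter ℕ) : Prop :=
  ∀ A : ℕ → Set ℕ, (∀ k, A k ∈ U) →
    ∃ a : ℕ → ℕ, StrictMono a ∧ Set.range a ∈ U ∧ ∀ k, a k ∈ A k

namespace Nat

lemma nth_le_nth_of_imp {p q : ℕ → Prop} (hpq : ∀ n, p n → q n)
    (hp : (Set.ofPred p).Infinite) (n : ℕ) : nth q n ≤ nth p n :=
  nth_le_of_strictMonoOn_of_mapsTo (nth p) (fun k _ => hpq _ (nth_mem_of_infinite hp k))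
    ((nth_strictMono hp).strictMonoOn _)

end Nat

lemma StrictMono.nth_mem_range_eq {a : ℕ → ℕ} (ha : StrictMono a) :
    Nat.nth (· ∈ Set.range a) = a := by
  have hinf : (Set.range a).Infinite := Set.infinite_range_of_injective ha.injective
  funext n
  have hall : ∀ k, ∀ hf : (Set.ofPred (· ∈ Set.range a)).Finite, k < hf.toFinset.card :=
    fun _ hf => absurd hf hinf
  refine (Nat.eq_nth_of_strictMonoOn_of_mapsTo_of_surjOn a ?_ ?_ (ha.strictMonoOn _) (hall n)).symm
  · rintro _ ⟨k, rfl⟩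
    exact ⟨k, hall k, rfl⟩
  · exact fun k _ => ⟨k, rfl⟩

namespace Ultrafilter

variable {U : Ultrafilter ℕ}

lemma infinite_of_mem_of_le_cofinite (hfree : (U : Filter ℕ) ≤ cofinite) {B : Set ℕ}
    (hB : B ∈ U) : B.Infinite :=
  frequently_cofinite_mem_iff_infinite.1 ((Eventually.frequently hB).filter_mono hfree)

end Ultrafilter

namespace IsRapid

variable {U : Ultrafilter ℕ}

lemma exists_le_nth (hR : IsRapid U) (g : ℕ → ℕ) :
    ∃ B ∈ U, ∀ n, g n ≤ Nat.nth (· ∈ B) n := by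
  let f : ℕ → ℕ := fun n => ∑ i ∈ Finset.range (n + 1), (g i + 1)
  have hf : StrictMono f := strictMono_nat_of_lt_succ fun n => by
    simp only [f, Finset.sum_range_succ _ (n + 1)]
    omega
  have hgf : ∀ n, g n ≤ f n := fun n =>
    (Nat.le_succ _).trans <| Finset.single_le_sum (f := fun i => g i + 1)
      (fun _ _ => Nat.zero_le _) (Finset.self_mem_range_succ n)
  obtain ⟨B, hBU, hB⟩ := hR f hf
  exact ⟨B, hBU, fun n => (hgf n).trans (hB n)⟩

end IsRapid

namespace IsPPoint

variable {U : Ultrafilter ℕ}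

lemma exists_diff_finite (hP : IsPPoint U) {A : ℕ → Set ℕ} (hA : ∀ k, A k ∈ U) :
    ∃ B ∈ U, ∀ k, (B \ A k).Finite := by
  let A' : ℕ → Set ℕ := fun k => ⋂ j ∈ Set.Iic k, A j
  have hA'U : ∀ k, A' k ∈ U := fun k => (biInter_mem (Set.finite_Iic k)).2 fun j _ => hA j
  have hA' : Antitone A' := fun _ _ hkl =>
    Set.biInter_subset_biInter_left (Set.Iic_subset_Iic.2 hkl)
  obtain ⟨B, hBU, hB⟩ := hP A' hA'U hA'
  exact ⟨B, hBU, fun k => (hB k).subset <|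
    Set.sdiff_subset_sdiff_right (Set.biInter_subset_of_mem Set.self_mem_Iic)⟩

lemma exists_forall_ge_mem (hP : IsPPoint U) {A : ℕ → Set ℕ} (hA : ∀ k, A k ∈ U) :
    ∃ B ∈ U, ∃ m : ℕ → ℕ, ∀ k, ∀ x ∈ B, m k ≤ x → x ∈ A k := by
  obtain ⟨B, hBU, hB⟩ := hP.exists_diff_finite hA
  choose N hN using fun k => (hB k).bddAbove
  refine ⟨B, hBU, fun k => N k + 1, fun k x hxB (hx : N k + 1 ≤ x) => by_contra fun hxA => ?_⟩
  have := hN k ⟨hxB, hxA⟩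
  omega

end IsPPoint

namespace HasSelectors

variable {U : Ultrafilter ℕ}

lemma of_isRapid_of_isPPoint (hfree : (U : Filter ℕ) ≤ cofinite) (hR : IsRapid U)
    (hP : IsPPoint U) : HasSelectors U := by
  intro A hA
  obtain ⟨B, hBU, m, hm⟩ := hP.exists_forall_ge_mem hA
  obtain ⟨C, hCU, hC⟩ := hR.exists_le_nth m
  have hD : (C ∩ B).Infinite :=
    Ultrafilter.infinite_of_mem_of_le_cofinite hfree (inter_mem hCU hBU)
  refine ⟨Nat.nth (· ∈ C ∩ B), Nat.nth_strictMono hD, ?_, fun k => ?_⟩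
  · rw [Nat.range_nth_of_infinite (p := (· ∈ C ∩ B)) hD]
    exact inter_mem hCU hBU
  · refine hm k _ (Nat.nth_mem_of_infinite hD k).2 ((hC k).trans ?_)
    exact Nat.nth_le_nth_of_imp (fun _ hn => hn.1) hD k

lemma isRapid (hfree : (U : Filter ℕ) ≤ cofinite) (h : HasSelectors U) : IsRapid U := by
  intro f _
  obtain ⟨a, ha, haU, haf⟩ := h (fun k => Set.Ici (f k))
    fun k => hfree (Nat.cofinite_eq_atTop ▸ Ici_mem_atTop (f k))
  exact ⟨Set.range a, haU, fun n => by rw [ha.nth_mem_range_eq]; exact haf n⟩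

lemma isPPoint (h : HasSelectors U) : IsPPoint U := by
  intro A hA hanti
  obtain ⟨a, ha, haU, haA⟩ := h A hA
  refine ⟨Set.range a, haU, fun k => ((Set.finite_Iio k).image a).subset ?_⟩
  rintro _ ⟨⟨j, rfl⟩, hjA⟩
  exact ⟨j, not_le.1 fun hkj => hjA (hanti hkj (haA j)), rfl⟩

end HasSelectors

theorem stmt_15 (U : Ultrafilter ℕ) (hfree : (U : Filter ℕ) ≤ Filter.cofinite) :
    (IsRapid U ∧ IsPPoint U) ↔
      ∀ A : ℕ → Set ℕ, (∀ k, A k ∈ U) →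
        ∃ a : ℕ → ℕ, StrictMono a ∧ Set.range a ∈ U ∧ ∀ k, a k ∈ A k :=
  ⟨fun ⟨hR, hP⟩ => HasSelectors.of_isRapid_of_isPPoint hfree hR hP,
    fun h => ⟨HasSelectors.isRapid hfree h, HasSelectors.isPPoint h⟩⟩
end

section
/- Let ℕ = ⊔_i E_i be a partition of ℕ into finite sets with limsup_i |E_i| = ∞, and let G = {A ⊆ ℕ : limsup_i |E_i ∖ A| < ∞}. Then G is a free filter on ℕ, a set A is G-stationary if and only if limsup_i |E_i ∩ A| = ∞, G is a rapid⁺ P⁺-filter, and G is not countably generated. -/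
/-!
Stationarity of `A` means that the blocks `E i` meet `A` in unboundedly many points. So from
stationary sets `I k` one can pick, for each `k`, `k + 1` points of `I k` inside a single block and
above any prescribed threshold `m k`; the union of these finite pieces is again stationary. For
decreasing `I k` it is almost contained in every `I k` (P⁺). For `I k = I` and `m k = f (t k)`,
with `t k` the number of points in the first `k + 1` pieces, at most `n` points of the union
lie below `f n`, so its `n`-th element is at least `f n` (rapid⁺). Finally, if `S n ∈ G` with bounds
`C n`, choose distinct blocks `E (φ n)` with more than `C n` points and a point
`x n ∈ E (φ n) ∩ S n`: then `(range x)ᶜ ∈ G`, as it misses at most one point per block, and it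
contains no `S n`.
-/

/-- The filter `G` associated to a partition `(E i)` of ℕ into finite sets:
`A ∈ G` iff `limsup_i |E_i \ A| < ∞`, i.e. the cardinalities are bounded. -/
def repickyFilter (E : ℕ → Set ℕ) : Set (Set ℕ) :=
  {A : Set ℕ | ∃ C : ℕ, ∀ i, (E i \ A).ncard ≤ C}

open Set Filter Finset

lemma Nat.count_mem_eq_ncard_inter_Iio (B : Set ℕ) [DecidablePred (· ∈ B)] (m : ℕ) :
    Nat.count (· ∈ B) m = (B ∩ Set.Iio m).ncard := by
  rw [Nat.count_eq_card_filter_range, ← Set.ncard_coe_finset]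
  congr 1
  ext x
  simp [and_comm]

lemma Nat.le_nth_of_ncard_inter_Iio_le {B : Set ℕ} (hB : B.Infinite) {m n : ℕ}
    (h : (B ∩ Set.Iio m).ncard ≤ n) : m ≤ Nat.nth (· ∈ B) n := by
  classical
  rw [← Nat.count_le_iff_le_nth (p := (· ∈ B)) hB, Nat.count_mem_eq_ncard_inter_Iio]
  exact h

lemma ncard_iUnion_inter_Iio_le {b : ℕ → Finset ℕ} (hne : ∀ k, (b k).Nonempty)
    {f : ℕ → ℕ} (hf : StrictMono f)
    (hge : ∀ k, ∀ x ∈ b k, f (∑ j ∈ range (k + 1), (b j).card) ≤ x) (n : ℕ) :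
    ((⋃ k, (b k : Set ℕ)) ∩ Set.Iio (f n)).ncard ≤ n := by
  set t : ℕ → ℕ := fun k => ∑ j ∈ range (k + 1), (b j).card
  have hsucc_le : ∀ k, k + 1 ≤ t k := fun k => by
    simpa using (range (k + 1)).card_nsmul_le_sum (fun j => (b j).card) 1
      fun j _ => (hne j).card_pos
  set F := (range n).filter (fun k => t k < n)
  have hsub : (⋃ k, (b k : Set ℕ)) ∩ Set.Iio (f n) ⊆ ↑(F.biUnion b) := by
    rintro x ⟨hx, hxn⟩
    obtain ⟨k, hk⟩ := Set.mem_iUnion.1 hx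
    have htk : t k < n := hf.lt_iff_lt.1 ((hge k x hk).trans_lt hxn)
    have := hsucc_le k
    exact Finset.mem_coe.2 (Finset.mem_biUnion.2
      ⟨k, Finset.mem_filter.2 ⟨Finset.mem_range.2 (by omega), htk⟩, hk⟩)
  have hsum : ∑ k ∈ F, (b k).card ≤ n := by
    rcases F.eq_empty_or_nonempty with hF | hF
    · simp [hF]
    calc ∑ k ∈ F, (b k).card ≤ t (F.max' hF) :=
          Finset.sum_le_sum_of_subset fun k hk =>
            Finset.mem_range.2 (Nat.lt_succ_of_le (F.le_max' k hk))
      _ ≤ n := (Finset.mem_filter.1 (F.max'_mem hF)).2.le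
  calc _ ≤ (F.biUnion b : Set ℕ).ncard := Set.ncard_le_ncard hsub (F.biUnion b).finite_toSet
    _ = (F.biUnion b).card := Set.ncard_coe_finset _
    _ ≤ n := Finset.card_biUnion_le.trans hsum

section RepickyFilter

variable {E : ℕ → Set ℕ}

lemma mem_repickyFilter_of_superset (hfin : ∀ i, (E i).Finite) {A B : Set ℕ}
    (hA : A ∈ repickyFilter E) (hAB : A ⊆ B) : B ∈ repickyFilter E := by
  obtain ⟨C, hC⟩ := hA
  exact ⟨C, fun i =>
    (Set.ncard_le_ncard (sdiff_subset_sdiff_right hAB) (hfin i).sdiff).trans (hC i)⟩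

lemma inter_mem_repickyFilter {A B : Set ℕ} (hA : A ∈ repickyFilter E)
    (hB : B ∈ repickyFilter E) : A ∩ B ∈ repickyFilter E := by
  obtain ⟨C, hC⟩ := hA
  obtain ⟨D, hD⟩ := hB
  refine ⟨C + D, fun i => ?_⟩
  calc (E i \ (A ∩ B)).ncard = ((E i \ A) ∪ (E i \ B)).ncard := by rw [sdiff_inter]
    _ ≤ (E i \ A).ncard + (E i \ B).ncard := Set.ncard_union_le _ _
    _ ≤ C + D := add_le_add (hC i) (hD i)

lemma univ_mem_repickyFilter : Set.univ ∈ repickyFilter E :=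
  ⟨0, fun _ => by simp⟩

lemma empty_notMem_repickyFilter (hlimsup : ∀ C : ℕ, ∃ i, C < (E i).ncard) :
    (∅ : Set ℕ) ∉ repickyFilter E := by
  rintro ⟨C, hC⟩
  obtain ⟨i, hi⟩ := hlimsup C
  exact (hC i).not_gt (by simpa using hi)

lemma mem_repickyFilter_of_finite_compl {A : Set ℕ} (hA : Aᶜ.Finite) :
    A ∈ repickyFilter E :=
  ⟨Aᶜ.ncard, fun _ => Set.ncard_le_ncard (fun _ hx => hx.2) hA⟩

lemma gStat_repickyFilter_iff {A : Set ℕ} :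
    GStat (repickyFilter E) A ↔ ∀ C : ℕ, ∃ i, C < (E i ∩ A).ncard := by
  simp only [GStat, repickyFilter, Set.mem_ofPred_eq, not_exists, not_forall, not_le, sdiff_compl]

lemma GStat.infinite_of_repickyFilter {A : Set ℕ} (hA : GStat (repickyFilter E) A) :
    A.Infinite := fun hfin => by
  obtain ⟨i, hi⟩ := gStat_repickyFilter_iff.1 hA A.ncard
  exact (Set.ncard_le_ncard inter_subset_right hfin).not_gt hi

lemma GStat.exists_finset_subset_inter (hfin : ∀ i, (E i).Finite) {I : Set ℕ}
    (hI : GStat (repickyFilter E) I) (m k : ℕ) :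
    ∃ (b : Finset ℕ) (i : ℕ), ↑b ⊆ E i ∩ I ∧ b.card = k ∧ ∀ x ∈ b, m ≤ x := by
  obtain ⟨i, hi⟩ := gStat_repickyFilter_iff.1 hI (m + k)
  have hk : k ≤ ((E i ∩ I) \ Set.Iio m).ncard := by
    have := Set.le_ncard_sdiff (Set.Iio m) (E i ∩ I) (Set.finite_Iio m)
    rw [Set.ncard_Iio_nat] at this
    omega
  obtain ⟨t, ht, rfl⟩ := Set.exists_subset_card_eq hk
  obtain ⟨b, rfl⟩ := (((hfin i).inter_of_left I).sdiff.subset ht).exists_finset_coe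
  exact ⟨b, i, ht.trans sdiff_subset, (Set.ncard_coe_finset b).symm,
    fun x hx => not_lt.1 (ht hx).2⟩

lemma exists_gStat_iUnion_blocks (hfin : ∀ i, (E i).Finite) {I : ℕ → Set ℕ}
    (hI : ∀ k, GStat (repickyFilter E) (I k)) (m : ℕ → ℕ) :
    ∃ b : ℕ → Finset ℕ, (∀ k, ↑(b k) ⊆ I k) ∧ (∀ k, (b k).card = k + 1) ∧
      (∀ k, ∀ x ∈ b k, m k ≤ x) ∧ GStat (repickyFilter E) (⋃ k, (b k : Set ℕ)) := by
  choose b i hb hcard hge using fun k => (hI k).exists_finset_subset_inter hfin (m k) (k + 1)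
  refine ⟨b, fun k => (hb k).trans inter_subset_right, hcard, hge,
    gStat_repickyFilter_iff.2 fun C => ⟨i C, ?_⟩⟩
  have hsub : (b C : Set ℕ) ⊆ E (i C) ∩ ⋃ k, (b k : Set ℕ) :=
    fun x hx => ⟨(hb C hx).1, Set.mem_iUnion.2 ⟨C, hx⟩⟩
  calc C < (b C : Set ℕ).ncard := by rw [Set.ncard_coe_finset, hcard]; omega
    _ ≤ _ := Set.ncard_le_ncard hsub ((hfin _).inter_of_left _)

theorem gRapidPlus_repickyFilter (hfin : ∀ i, (E i).Finite) : GRapidPlus (repickyFilter E) := by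
  intro I hI f hf
  obtain ⟨b, hbI, hcard, hge, hB⟩ :=
    exists_gStat_iUnion_blocks hfin (fun _ => hI) fun k => f (∑ j ∈ range (k + 1), (j + 1))
  refine ⟨_, Set.iUnion_subset hbI, hB, fun n => Nat.le_nth_of_ncard_inter_Iio_le
    hB.infinite_of_repickyFilter (ncard_iUnion_inter_Iio_le ?_ hf ?_ n)⟩
  · exact fun k => Finset.card_pos.1 (by rw [hcard]; omega)
  · simpa only [hcard] using hge

theorem gPPlus_repickyFilter (hfin : ∀ i, (E i).Finite) : GPPlus (repickyFilter E) := by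
  intro A hA hanti
  obtain ⟨b, hbA, -, -, hB⟩ := exists_gStat_iUnion_blocks hfin hA fun _ => 0
  refine ⟨_, hB, fun k => ((Finset.range k).biUnion b).finite_toSet.subset ?_⟩
  rintro x ⟨hx, hxA⟩
  obtain ⟨j, hj⟩ := Set.mem_iUnion.1 hx
  have hjk : j < k := lt_of_not_ge fun hkj => hxA (hanti hkj (hbA j hj))
  exact Finset.mem_coe.2 (Finset.mem_biUnion.2 ⟨j, Finset.mem_range.2 hjk, hj⟩)

lemma frequently_lt_ncard (hlimsup : ∀ C : ℕ, ∃ i, C < (E i).ncard) (C : ℕ) :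
    ∃ᶠ i in atTop, C < (E i).ncard := by
  refine frequently_atTop.2 fun a => ?_
  obtain ⟨i, hi⟩ := hlimsup (C + ∑ j ∈ range a, (E j).ncard)
  refine ⟨i, le_of_not_gt fun hia => ?_, by omega⟩
  have := Finset.single_le_sum (f := fun j => (E j).ncard) (fun _ _ => Nat.zero_le _)
    (Finset.mem_range.2 hia)
  omega

lemma compl_range_mem_repickyFilter (hdisj : Pairwise (Function.onFun Disjoint E))
    {φ : ℕ → ℕ} (hφ : φ.Injective) {x : ℕ → ℕ} (hx : ∀ n, x n ∈ E (φ n)) :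
    (Set.range x)ᶜ ∈ repickyFilter E := by
  refine ⟨1, fun i => ?_⟩
  have hblock : ∀ n, x n ∈ E i → φ n = i := fun n hn =>
    by_contra fun hne => Set.disjoint_left.1 (hdisj hne) (hx n) hn
  have hsub : (E i ∩ Set.range x).Subsingleton := by
    rintro _ ⟨hm, m, rfl⟩ _ ⟨hn, n, rfl⟩
    rw [hφ ((hblock m hm).trans (hblock n hn).symm)]
  rw [sdiff_compl]
  exact (Set.ncard_le_one hsub.finite).2 hsub

theorem not_countably_generated_repickyFilter (hdisj : Pairwise (Function.onFun Disjoint E))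
    (hlimsup : ∀ C : ℕ, ∃ i, C < (E i).ncard) :
    ¬ ∃ S : ℕ → Set ℕ, (∀ n, S n ∈ repickyFilter E) ∧
        ∀ A ∈ repickyFilter E, ∃ n, S n ⊆ A := by
  rintro ⟨S, hS, hgen⟩
  choose C hC using hS
  obtain ⟨φ, hφ, hφC⟩ :=
    extraction_forall_of_frequently fun n => frequently_lt_ncard hlimsup (C n)
  have hmeet : ∀ n, (E (φ n) ∩ S n).Nonempty := fun n =>
    Set.not_disjoint_iff_nonempty_inter.1 fun hES =>
      (hC n (φ n)).not_gt (by rw [hES.sdiff_eq_left]; exact hφC n)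
  choose x hx using hmeet
  obtain ⟨n, hn⟩ := hgen _ (compl_range_mem_repickyFilter hdisj hφ.injective fun n => (hx n).1)
  exact hn (hx n).2 ⟨n, rfl⟩

end RepickyFilter

theorem stmt_16_general (E : ℕ → Set ℕ)
    (hfin : ∀ i, (E i).Finite)
    (hdisj : Pairwise (Function.onFun Disjoint E))
    (hlimsup : ∀ C : ℕ, ∃ i, C < (E i).ncard) :
    -- G is a filter on ℕ:
    ((∀ A B : Set ℕ, A ∈ repickyFilter E → A ⊆ B → B ∈ repickyFilter E) ∧
     (∀ A B : Set ℕ, A ∈ repickyFilter E → B ∈ repickyFilter E →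
        A ∩ B ∈ repickyFilter E) ∧
     Set.univ ∈ repickyFilter E ∧ (∅ : Set ℕ) ∉ repickyFilter E) ∧
    -- G is free:
    (∀ A : Set ℕ, (Aᶜ).Finite → A ∈ repickyFilter E) ∧
    -- characterisation of stationary sets:
    (∀ A : Set ℕ, GStat (repickyFilter E) A ↔ ∀ C : ℕ, ∃ i, C < (E i ∩ A).ncard) ∧
    -- G is a rapid⁺ P⁺-filter:
    GRapidPlus (repickyFilter E) ∧ GPPlus (repickyFilter E) ∧
    -- G is not countably generated:
    ¬ ∃ S : ℕ → Set ℕ, (∀ n, S n ∈ repickyFilter E) ∧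
        ∀ A ∈ repickyFilter E, ∃ n, S n ⊆ A :=
  ⟨⟨fun _ _ => mem_repickyFilter_of_superset hfin, fun _ _ => inter_mem_repickyFilter,
      univ_mem_repickyFilter, empty_notMem_repickyFilter hlimsup⟩,
    fun _ => mem_repickyFilter_of_finite_compl, fun _ => gStat_repickyFilter_iff,
    gRapidPlus_repickyFilter hfin, gPPlus_repickyFilter hfin,
    not_countably_generated_repickyFilter hdisj hlimsup⟩

theorem stmt_16 (E : ℕ → Set ℕ)
    (hfin : ∀ i, (E i).Finite)
    (hdisj : Pairwise (Function.onFun Disjoint E))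
    (hcover : (⋃ i, E i) = Set.univ)
    (hlimsup : ∀ C : ℕ, ∃ i, C < (E i).ncard) :
    -- G is a filter on ℕ:
    ((∀ A B : Set ℕ, A ∈ repickyFilter E → A ⊆ B → B ∈ repickyFilter E) ∧
     (∀ A B : Set ℕ, A ∈ repickyFilter E → B ∈ repickyFilter E →
        A ∩ B ∈ repickyFilter E) ∧
     Set.univ ∈ repickyFilter E ∧ (∅ : Set ℕ) ∉ repickyFilter E) ∧
    -- G is free:
    (∀ A : Set ℕ, (Aᶜ).Finite → A ∈ repickyFilter E) ∧
    -- characterisation of stationary sets: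
    (∀ A : Set ℕ, GStat (repickyFilter E) A ↔ ∀ C : ℕ, ∃ i, C < (E i ∩ A).ncard) ∧
    -- G is a rapid⁺ P⁺-filter:
    GRapidPlus (repickyFilter E) ∧ GPPlus (repickyFilter E) ∧
    -- G is not countably generated:
    ¬ ∃ S : ℕ → Set ℕ, (∀ n, S n ∈ repickyFilter E) ∧
        ∀ A ∈ repickyFilter E, ∃ n, S n ⊆ A :=
  stmt_16_general E hfin hdisj hlimsup
end

section
/- Let X and Y be locally convex topological vector spaces, π : X → Y a surjective continuous open linear map (quotient map), and F a filter on ℕ. If every pointwise F-bounded sequence of continuous linear maps from X to any locally convex space Z is F-equicontinuous, then the same holds for Y: every pointwise F-bounded sequence of continuous linear maps from Y to any locally convex space Z is F-equicontinuous. -/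
universe u v w

/-! Apply the hypothesis on `X` to `T i ∘ π`, which is again pointwise `F`-bounded; the
`0`-neighbourhood `U` it yields is carried by the open map `π` to the `0`-neighbourhood
`π '' U` of `Y`, and `T i` maps `π '' U` into `V` exactly when `T i ∘ π` maps `U` into `V`. -/

theorem IsOpenMap.exists_mem_nhds_eventually_forall_mem {ι X Y Z : Type*}
    [TopologicalSpace X] [TopologicalSpace Y] {F : Filter ι} {π : X → Y} (hπ : IsOpenMap π)
    {T : ι → Y → Z} {V : Set Z} {x : X} {U : Set X} (hU : U ∈ nhds x)
    (hT : ∀ᶠ i in F, ∀ x ∈ U, T i (π x) ∈ V) :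
    ∃ W ∈ nhds (π x), ∀ᶠ i in F, ∀ y ∈ W, T i y ∈ V := by
  refine ⟨π '' U, hπ.image_mem_nhds hU, ?_⟩
  filter_upwards [hT] with i hi
  rintro _ ⟨x, hx, rfl⟩
  exact hi x hx

theorem stmt_17_general (F : Filter ℕ)
    {X : Type v} {Y : Type w}
    [AddCommGroup X] [Module ℝ X] [TopologicalSpace X]
    [AddCommGroup Y] [Module ℝ Y] [TopologicalSpace Y]
    (π : X →L[ℝ] Y) (hopen : IsOpenMap π)
    (hX : ∀ (Z : Type u) [AddCommGroup Z] [Module ℝ Z] [TopologicalSpace Z]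
        [IsTopologicalAddGroup Z] [ContinuousSMul ℝ Z] [LocallyConvexSpace ℝ Z],
      ∀ T : ℕ → X →L[ℝ] Z,
        (∀ x : X, ∀ V ∈ nhds (0 : Z), ∃ t : ℝ, 0 < t ∧ {i | t • T i x ∈ V} ∈ F) →
        ∀ V ∈ nhds (0 : Z), ∃ U ∈ nhds (0 : X), {i | ∀ x ∈ U, T i x ∈ V} ∈ F) :
    ∀ (Z : Type u) [AddCommGroup Z] [Module ℝ Z] [TopologicalSpace Z]
        [IsTopologicalAddGroup Z] [ContinuousSMul ℝ Z] [LocallyConvexSpace ℝ Z],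
      ∀ T : ℕ → Y →L[ℝ] Z,
        (∀ y : Y, ∀ V ∈ nhds (0 : Z), ∃ t : ℝ, 0 < t ∧ {i | t • T i y ∈ V} ∈ F) →
        ∀ V ∈ nhds (0 : Z), ∃ U ∈ nhds (0 : Y), {i | ∀ y ∈ U, T i y ∈ V} ∈ F := by
  intro Z _ _ _ _ _ _ T hT V hV
  obtain ⟨U, hU, hUV⟩ := hX Z (fun i => (T i).comp π) (fun x => hT (π x)) V hV
  have := hopen.exists_mem_nhds_eventually_forall_mem (T := fun i => T i) hU hUV
  rwa [map_zero] at this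

theorem stmt_17 (F : Filter ℕ)
    {X : Type v} {Y : Type w}
    [AddCommGroup X] [Module ℝ X] [TopologicalSpace X]
    [IsTopologicalAddGroup X] [ContinuousSMul ℝ X] [LocallyConvexSpace ℝ X]
    [AddCommGroup Y] [Module ℝ Y] [TopologicalSpace Y]
    [IsTopologicalAddGroup Y] [ContinuousSMul ℝ Y] [LocallyConvexSpace ℝ Y]
    (π : X →L[ℝ] Y) (hsurj : Function.Surjective π) (hopen : IsOpenMap π)
    (hX : ∀ (Z : Type u) [AddCommGroup Z] [Module ℝ Z] [TopologicalSpace Z]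
        [IsTopologicalAddGroup Z] [ContinuousSMul ℝ Z] [LocallyConvexSpace ℝ Z],
      ∀ T : ℕ → X →L[ℝ] Z,
        (∀ x : X, ∀ V ∈ nhds (0 : Z), ∃ t : ℝ, 0 < t ∧ {i | t • T i x ∈ V} ∈ F) →
        ∀ V ∈ nhds (0 : Z), ∃ U ∈ nhds (0 : X), {i | ∀ x ∈ U, T i x ∈ V} ∈ F) :
    ∀ (Z : Type u) [AddCommGroup Z] [Module ℝ Z] [TopologicalSpace Z]
        [IsTopologicalAddGroup Z] [ContinuousSMul ℝ Z] [LocallyConvexSpace ℝ Z],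
      ∀ T : ℕ → Y →L[ℝ] Z,
        (∀ y : Y, ∀ V ∈ nhds (0 : Z), ∃ t : ℝ, 0 < t ∧ {i | t • T i y ∈ V} ∈ F) →
        ∀ V ∈ nhds (0 : Z), ∃ U ∈ nhds (0 : Y), {i | ∀ y ∈ U, T i y ∈ V} ∈ F :=
  stmt_17_general F π hopen hX
end

section
/- Let F be a free filter on ℕ that is a Baire filter, meaning: for every complete metric space X and every order-reversing map f from (F, ⊆) to the nowhere dense subsets of X ordered by ⊆, the union ⋃_{A∈F} f(A) is not all of X. Then for every Fréchet space X, every topological vector space Y, and every pointwise F-bounded sequence (T_i) of continuous linear maps from X to Y, the sequence (T_i) is F-equicontinuous. -/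
/-!
Fix a closed balanced `0`-neighbourhood `W` with `W - W ⊆ V`. For `A ∈ F` the sets
`E_A = {x | T i x ∈ (min A + 1) • W for all i ∈ A}` are closed, antitone in `A`, and cover `X`:
if `t • T i x ∈ W` for `i` in some `A ∈ F`, shrink `A` to `A ∩ [1/t, ∞)`, still in `F` since `F`
is free. A complete metric inducing the uniformity of `X` turns the Baire property of `F` into some
`A ∈ F` for which `E_A` has an interior point `x₀`. Translating by `x₀` and rescaling by
`min A + 1` gives a `0`-neighbourhood `U` with `T i '' U ⊆ W - W ⊆ V` for every `i ∈ A`.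
-/

universe u w

open Filter Topology Uniformity Set Pointwise

def IsBaireFilter (F : Filter ℕ) : Prop :=
  ∀ (M : Type u) [MetricSpace M] [CompleteSpace M], ∀ g : Set ℕ → Set M,
    (∀ A ∈ F, IsNowhereDense (g A)) → (∀ A ∈ F, ∀ B ∈ F, A ⊆ B → g B ⊆ g A) →
    (⋃ A ∈ F, g A) ≠ Set.univ

theorem IsBaireFilter.exists_mem_interior_nonempty {F : Filter ℕ} (hF : IsBaireFilter.{u} F)
    {X : Type u} [UniformSpace X] [CompleteSpace X] [T0Space X] [IsCountablyGenerated (𝓤 X)]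
    {g : Set ℕ → Set X} (hclosed : ∀ A ∈ F, IsClosed (g A))
    (hanti : ∀ A ∈ F, ∀ B ∈ F, A ⊆ B → g B ⊆ g A) (hcover : ∀ x, ∃ A ∈ F, x ∈ g A) :
    ∃ A ∈ F, (interior (g A)).Nonempty := by
  by_contra! h
  let _ := UniformSpace.metricSpace X
  have : CompleteSpace X := ‹CompleteSpace X›
  refine hF X g (fun A hA => ?_) hanti ?_
  · exact (hclosed A hA).isNowhereDense_iff.2 (h A hA)
  · simpa [eq_univ_iff_forall] using hcover

theorem exists_isClosed_balanced_nhds_zero_sub_subset {𝕜 Y : Type*} [NontriviallyNormedField 𝕜]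
    [AddCommGroup Y] [Module 𝕜 Y] [TopologicalSpace Y] [IsTopologicalAddGroup Y]
    [ContinuousSMul 𝕜 Y] {V : Set Y} (hV : V ∈ 𝓝 0) :
    ∃ W ∈ 𝓝 (0 : Y), IsClosed W ∧ Balanced 𝕜 W ∧ W - W ⊆ V := by
  obtain ⟨V', hV', hV'V⟩ := exists_nhds_half_neg hV
  obtain ⟨W, ⟨hW, hWc, hWb⟩, hWV'⟩ := (nhds_basis_closed_balanced 𝕜 Y).mem_iff.1 hV'
  refine ⟨W, hW, hWc, hWb, ?_⟩
  rintro _ ⟨v, hv, w, hw, rfl⟩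
  exact hV'V v (hWV' hv) w (hWV' hw)

theorem exists_nhds_zero_forall_mem_sub_of_interior_nonempty {ι 𝕜 X Y : Type*} [Field 𝕜]
    [AddCommGroup X] [Module 𝕜 X] [TopologicalSpace X] [ContinuousAdd X] [ContinuousConstSMul 𝕜 X]
    [AddCommGroup Y] [Module 𝕜 Y] [TopologicalSpace Y]
    (T : ι → X →L[𝕜] Y) {A : Set ι} {S : Set Y} {c : 𝕜} (hc : c ≠ 0)
    (h : (interior {x | ∀ i ∈ A, T i x ∈ c • S}).Nonempty) :
    ∃ U ∈ 𝓝 (0 : X), ∀ i ∈ A, ∀ x ∈ U, T i x ∈ S - S := by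
  obtain ⟨x₀, hx₀⟩ := h
  have hcont : Continuous fun x : X => x₀ + c • x := by fun_prop
  have hU : (fun x : X => x₀ + c • x) ⁻¹' interior {x | ∀ i ∈ A, T i x ∈ c • S} ∈ 𝓝 0 :=
    hcont.continuousAt.preimage_mem_nhds (by simpa using isOpen_interior.mem_nhds hx₀)
  refine ⟨_, hU, fun i hi x hx => ?_⟩
  obtain ⟨v, hv, hcv⟩ := interior_subset hx i hi
  obtain ⟨w, hw, hcw⟩ := interior_subset hx₀ i hi
  refine ⟨v, hv, w, hw, smul_right_injective Y hc ?_⟩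
  simp only [smul_sub, hcv, hcw, map_add, map_smul, add_sub_cancel_left]

section LevelSet

variable {X Y : Type*} [AddCommGroup X] [Module ℝ X] [TopologicalSpace X]
  [AddCommGroup Y] [Module ℝ Y] [TopologicalSpace Y] (T : ℕ → X →L[ℝ] Y) (W : Set Y)

/-- Scaling by `sInf A + 1` is what makes `A ↦ levelSet T W A` antitone for balanced `W`; the junk
value `sInf ∅ = 0` is harmless since `levelSet T W ∅ = univ`. -/
def levelSet (A : Set ℕ) : Set X := {x | ∀ i ∈ A, T i x ∈ ((sInf A : ℕ) + 1 : ℝ) • W}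

theorem isClosed_levelSet [ContinuousConstSMul ℝ Y] (hW : IsClosed W) (A : Set ℕ) :
    IsClosed (levelSet T W A) := by
  have : levelSet T W A = ⋂ i ∈ A, T i ⁻¹' (((sInf A : ℕ) + 1 : ℝ) • W) := by
    ext; simp [levelSet]
  rw [this]
  exact isClosed_biInter fun i _ => (hW.smul_of_ne_zero (by positivity)).preimage (T i).continuous

theorem levelSet_anti (hW : Balanced ℝ W) {A B : Set ℕ} (hAB : A ⊆ B) :
    levelSet T W B ⊆ levelSet T W A := by
  intro x hx i hi
  have hBA : sInf B ≤ sInf A := Nat.sInf_le (hAB (Nat.sInf_mem ⟨i, hi⟩))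
  refine hW.smul_mono ?_ (hx i (hAB hi))
  rw [Real.norm_of_nonneg (by positivity), Real.norm_of_nonneg (by positivity)]
  gcongr

theorem exists_mem_levelSet {F : Filter ℕ} (hfree : F ≤ cofinite) (hW : Balanced ℝ W) {x : X}
    {t : ℝ} (ht : 0 < t) (hx : {i | t • T i x ∈ W} ∈ F) : ∃ A ∈ F, x ∈ levelSet T W A := by
  obtain ⟨n, hn⟩ := exists_nat_ge t⁻¹
  have hIci : Ici n ∈ F := hfree (Nat.cofinite_eq_atTop ▸ Ici_mem_atTop n)
  refine ⟨{i | t • T i x ∈ W} ∩ Ici n, inter_mem hx hIci, fun i hi => ?_⟩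
  have hn_le : n ≤ sInf ({i | t • T i x ∈ W} ∩ Ici n) := (Nat.sInf_mem ⟨i, hi⟩).2
  refine hW.smul_mono ?_ ((mem_inv_smul_set_iff₀ ht.ne' _ _).2 hi.1)
  rw [Real.norm_of_nonneg (by positivity), Real.norm_of_nonneg (by positivity)]
  calc t⁻¹ ≤ n := hn
    _ ≤ _ := by exact_mod_cast hn_le.trans (Nat.le_succ _)

end LevelSet

theorem stmt_18_general (F : Filter ℕ) (hfree : F ≤ Filter.cofinite)
    (hBaire : ∀ (M : Type u) [MetricSpace M] [CompleteSpace M],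
      ∀ g : Set ℕ → Set M,
        (∀ A ∈ F, IsNowhereDense (g A)) →
        (∀ A ∈ F, ∀ B ∈ F, A ⊆ B → g B ⊆ g A) →
        (⋃ A ∈ F, g A) ≠ Set.univ)
    {X : Type u} {Y : Type w}
    [AddCommGroup X] [Module ℝ X] [UniformSpace X] [IsUniformAddGroup X]
    [ContinuousSMul ℝ X] [CompleteSpace X]
    [TopologicalSpace.MetrizableSpace X]
    [AddCommGroup Y] [Module ℝ Y] [TopologicalSpace Y]
    [IsTopologicalAddGroup Y] [ContinuousSMul ℝ Y]
    (T : ℕ → X →L[ℝ] Y)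
    (hpb : ∀ x : X, ∀ V ∈ nhds (0 : Y), ∃ t : ℝ, 0 < t ∧ {i | t • T i x ∈ V} ∈ F) :
    ∀ V ∈ nhds (0 : Y), ∃ U ∈ nhds (0 : X), {i | ∀ x ∈ U, T i x ∈ V} ∈ F := by
  intro V hV
  obtain ⟨W, hW, hWc, hWb, hWV⟩ := exists_isClosed_balanced_nhds_zero_sub_subset (𝕜 := ℝ) hV
  have := IsUniformAddGroup.uniformity_countably_generated (α := X)
  obtain ⟨A, hA, hint⟩ := IsBaireFilter.exists_mem_interior_nonempty hBaire
    (fun A _ => isClosed_levelSet T W hWc A) (fun _ _ _ _ => levelSet_anti T W hWb)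
    (fun x => let ⟨_, ht, hx⟩ := hpb x W hW; exists_mem_levelSet T W hfree hWb ht hx)
  obtain ⟨U, hU, hUW⟩ :=
    exists_nhds_zero_forall_mem_sub_of_interior_nonempty T (by positivity) hint
  exact ⟨U, hU, mem_of_superset hA fun i hi x hx => hWV (hUW i hi x hx)⟩

theorem stmt_18 (F : Filter ℕ) (hfree : F ≤ Filter.cofinite) [F.NeBot]
    (hBaire : ∀ (M : Type u) [MetricSpace M] [CompleteSpace M],
      ∀ g : Set ℕ → Set M,
        (∀ A ∈ F, IsNowhereDense (g A)) →
        (∀ A ∈ F, ∀ B ∈ F, A ⊆ B → g B ⊆ g A) →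
        (⋃ A ∈ F, g A) ≠ Set.univ)
    {X : Type u} {Y : Type w}
    [AddCommGroup X] [Module ℝ X] [UniformSpace X] [IsUniformAddGroup X]
    [ContinuousSMul ℝ X] [LocallyConvexSpace ℝ X] [CompleteSpace X]
    [TopologicalSpace.MetrizableSpace X]
    [AddCommGroup Y] [Module ℝ Y] [TopologicalSpace Y]
    [IsTopologicalAddGroup Y] [ContinuousSMul ℝ Y]
    (T : ℕ → X →L[ℝ] Y)
    (hpb : ∀ x : X, ∀ V ∈ nhds (0 : Y), ∃ t : ℝ, 0 < t ∧ {i | t • T i x ∈ V} ∈ F) :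
    ∀ V ∈ nhds (0 : Y), ∃ U ∈ nhds (0 : X), {i | ∀ x ∈ U, T i x ∈ V} ∈ F :=
  stmt_18_general F hfree hBaire T hpb
end

section
/- Let F be a free filter on ℕ which is a P⁺-filter, let (X_i)_{i∈ℕ} be a sequence of Fréchet spaces, and let X = Π_i X_i with the product topology. Then the uniform F-boundedness principle holds for X (i.e., for every locally convex Y, every pointwise F-bounded sequence in L(X,Y) is F-equicontinuous) if and only if it holds for every X_i. -/
universe u v

/-- The uniform `F`-boundedness principle holds for the space `X`: for every
locally convex space `Y`, every pointwise `F`-bounded sequence of continuous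
linear maps `X → Y` is `F`-equicontinuous. -/
def UBPFor (F : Filter ℕ) (X : Type v) [AddCommGroup X] [Module ℝ X]
    [TopologicalSpace X] : Prop :=
  ∀ (Y : Type u) [AddCommGroup Y] [Module ℝ Y] [TopologicalSpace Y]
      [IsTopologicalAddGroup Y] [ContinuousSMul ℝ Y] [LocallyConvexSpace ℝ Y],
    ∀ T : ℕ → X →L[ℝ] Y,
      (∀ x : X, ∀ V ∈ nhds (0 : Y), ∃ t : ℝ, 0 < t ∧ {j | t • T j x ∈ V} ∈ F) →
      ∀ V ∈ nhds (0 : Y), ∃ U ∈ nhds (0 : X), {j | ∀ x ∈ U, T j x ∈ V} ∈ F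

/-!
One direction: a pointwise `F`-bounded family on a factor `X i`, composed with the projection,
is pointwise `F`-bounded on the product, and composing its `F`-equicontinuity with the inclusion
`X i → ∏ X` gives the claim.

Conversely, the principle for the factors makes `T j` `F`-equicontinuous on every finite head
`∏_{i<n} X i`, so it suffices to find, for each continuous seminorm `p` on `Y`, a tail
`∏_{i≥n} X i` on which `p ∘ T j` vanishes for `F`-almost all `j`. A continuous seminorm on the
product vanishes on some tail, so every `j` eventually leaves the decreasing sets
`C n = {j | p ∘ T j ≠ 0 on the n-th tail}`. If all `C n` were `F`-stationary, the P⁺ property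
would give a stationary `B` almost contained in each `C n`, and a gliding hump along the finite
sets `B ∩ (C n \ C (n+1))` builds an `x` with `n ≤ p (T j x)` there, contradicting pointwise
`F`-boundedness at `x`.
-/

open Filter Set Topology

section Families

variable (F : Filter ℕ) {X Y Z : Type*} [AddCommGroup X] [Module ℝ X] [TopologicalSpace X]
  [AddCommGroup Y] [Module ℝ Y] [TopologicalSpace Y] [AddCommGroup Z] [Module ℝ Z]
  [TopologicalSpace Z]

/-- `UBPFor F X` unfolds to: every `FPointwiseBounded F T` is `FEquicontinuous F T`. -/
def FPointwiseBounded (T : ℕ → X →L[ℝ] Y) : Prop :=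
  ∀ x, ∀ V ∈ 𝓝 (0 : Y), ∃ t : ℝ, 0 < t ∧ ∀ᶠ j in F, t • T j x ∈ V

def FEquicontinuous (T : ℕ → X →L[ℝ] Y) : Prop :=
  ∀ V ∈ 𝓝 (0 : Y), ∃ U ∈ 𝓝 (0 : X), ∀ᶠ j in F, MapsTo (T j) U V

variable {F}

theorem FPointwiseBounded.comp {T : ℕ → X →L[ℝ] Y} (hT : FPointwiseBounded F T)
    (A : Z →L[ℝ] X) : FPointwiseBounded F fun j => (T j).comp A :=
  fun z => hT (A z)

theorem FEquicontinuous.comp {T : ℕ → X →L[ℝ] Y} (hT : FEquicontinuous F T) (A : Z →L[ℝ] X) :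
    FEquicontinuous F fun j => (T j).comp A := by
  intro V hV
  obtain ⟨U, hU, hTU⟩ := hT V hV
  exact ⟨A ⁻¹' U, A.continuous.tendsto' 0 0 (map_zero A) hU,
    hTU.mono fun j hj => hj.comp (mapsTo_preimage A U)⟩

variable [ContinuousAdd Y]

theorem FEquicontinuous.add {S T : ℕ → X →L[ℝ] Y} (hS : FEquicontinuous F S)
    (hT : FEquicontinuous F T) : FEquicontinuous F (S + T) := by
  intro V hV
  obtain ⟨V', hV', hV'V⟩ := exists_nhds_zero_half hV
  obtain ⟨US, hUS, hSU⟩ := hS V' hV'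
  obtain ⟨UT, hUT, hTU⟩ := hT V' hV'
  exact ⟨US ∩ UT, inter_mem hUS hUT, (hSU.and hTU).mono fun j hj x hx =>
    hV'V _ (hj.1 hx.1) _ (hj.2 hx.2)⟩

theorem FEquicontinuous.finsetSum {ι : Type*} (s : Finset ι) {T : ι → ℕ → X →L[ℝ] Y}
    (hT : ∀ i ∈ s, FEquicontinuous F (T i)) : FEquicontinuous F (∑ i ∈ s, T i) := by
  classical
  induction s using Finset.induction_on with
  | empty =>
    intro V hV
    exact ⟨univ, univ_mem, Eventually.of_forall fun j x _ => by simpa using mem_of_mem_nhds hV⟩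
  | insert a s ha ih =>
    rw [Finset.sum_insert ha]
    exact (hT a (s.mem_insert_self a)).add (ih fun i hi => hT i (Finset.mem_insert_of_mem hi))

end Families

namespace Seminorm

variable {E : Type*} [AddCommGroup E] [Module ℝ E]

theorem eq_zero_of_coe_subset_ball (q : Seminorm ℝ E) {S : Submodule ℝ E}
    (hS : (S : Set E) ⊆ q.ball 0 1) {z : E} (hz : z ∈ S) : q z = 0 := by
  by_contra hne
  have hpos : 0 < q z := (apply_nonneg q z).lt_of_ne' hne
  have h := hS (S.smul_mem (2 / q z) hz)
  rw [mem_ball_zero, map_smul_eq_mul, Real.norm_of_nonneg (by positivity),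
    div_mul_cancel₀ _ hne] at h
  norm_num at h

theorem map_add_eq_left_of_eq_zero (q : Seminorm ℝ E) (x : E) {y : E} (hy : q y = 0) :
    q (x + y) = q x := by
  refine le_antisymm ((map_add_le_add q x y).trans_eq (by rw [hy, add_zero])) ?_
  calc q x = q (x + y - y) := by rw [add_sub_cancel_right]
    _ ≤ q (x + y) + q y := map_sub_le_add q _ _
    _ = q (x + y) := by rw [hy, add_zero]

theorem eventually_le_map_add_smul (q : Seminorm ℝ E) (v : E) {w : E} (hw : 0 < q w) (M : ℝ) :
    ∀ᶠ t : ℝ in atTop, M ≤ q (v + t • w) := by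
  filter_upwards [eventually_ge_atTop 0, eventually_ge_atTop ((M + q v) / q w)] with t ht₀ ht
  have h : q (t • w) ≤ q (v + t • w) + q v := by
    simpa only [add_sub_cancel_left] using map_sub_le_add q (v + t • w) v
  rw [map_smul_eq_mul, Real.norm_of_nonneg ht₀] at h
  rw [div_le_iff₀ hw] at ht
  linarith

theorem exists_forall_le_map_add {ι : Type*} (S : Submodule ℝ E) (q : ι → Seminorm ℝ E)
    {J : Set ι} (hJ : J.Finite) (hq : ∀ j ∈ J, ∃ w ∈ S, q j w ≠ 0) (v : E) (M : ℝ) :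
    ∃ y ∈ S, ∀ j ∈ J, M ≤ q j (v + y) := by
  induction J, hJ using Set.Finite.induction_on with
  | empty => exact ⟨0, S.zero_mem, by simp⟩
  | @insert a J _ hJ ih =>
    obtain ⟨y, hyS, hy⟩ := ih fun j hj => hq j (mem_insert_of_mem a hj)
    obtain ⟨w, hwS, hwa⟩ := hq a (mem_insert a J)
    have hlarge : ∀ j ∈ insert a J, ∀ᶠ t : ℝ in atTop, M ≤ q j (v + (y + t • w)) := by
      intro j hj
      simp_rw [← add_assoc]
      rcases (apply_nonneg (q j) w).eq_or_lt with hw | hw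
      · have hjJ : j ∈ J := hj.resolve_left fun h => hwa (h ▸ hw.symm)
        refine Eventually.of_forall fun t => ?_
        rw [map_add_eq_left_of_eq_zero _ _ (by rw [map_smul_eq_mul, ← hw, mul_zero])]
        exact hy j hjJ
      · exact eventually_le_map_add_smul _ _ hw M
    obtain ⟨t, ht⟩ := ((eventually_all_finite (hJ.insert a)).2 hlarge).exists
    exact ⟨y + t • w, S.add_mem hyS (S.smul_mem t hwS), ht⟩

end Seminorm

section Tails

variable {Xs : ℕ → Type*} [∀ i, AddCommGroup (Xs i)] [∀ i, Module ℝ (Xs i)]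

def tailSubmodule (n : ℕ) : Submodule ℝ (∀ i, Xs i) :=
  Submodule.pi (Iio n) fun _ => ⊥

theorem mem_tailSubmodule {n : ℕ} {x : ∀ i, Xs i} :
    x ∈ tailSubmodule n ↔ ∀ i < n, x i = 0 := by
  simp [tailSubmodule, Submodule.mem_pi]

theorem tailSubmodule_antitone : Antitone (tailSubmodule (Xs := Xs)) :=
  fun _ _ hmn _ hx => mem_tailSubmodule.2 fun i hi => mem_tailSubmodule.1 hx i (hi.trans_le hmn)

theorem sub_sum_single_mem_tailSubmodule (x : ∀ i, Xs i) (n : ℕ) :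
    x - ∑ i ∈ Finset.range n, Pi.single i (x i) ∈ tailSubmodule n :=
  mem_tailSubmodule.2 fun i hi => by simp [Finset.sum_pi_single, hi]

theorem exists_sub_mem_tailSubmodule (H : ℕ → ∀ i, Xs i)
    (hH : ∀ n, H (n + 1) - H n ∈ tailSubmodule n) :
    ∃ x, ∀ n, x - H n ∈ tailSubmodule n := by
  have hstable : ∀ i m, i < m → H m i = H (i + 1) i := by
    intro i m him
    induction m, him using Nat.le_induction with
    | base => rfl
    | succ m him ih =>
      rw [← ih, ← sub_eq_zero, ← Pi.sub_apply]
      exact mem_tailSubmodule.1 (hH m) i him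
  exact ⟨fun i => H (i + 1) i, fun n => mem_tailSubmodule.2 fun i hi => by
    rw [Pi.sub_apply, hstable i n hi, sub_self]⟩

variable [∀ i, TopologicalSpace (Xs i)]

theorem exists_tailSubmodule_subset {U : Set (∀ i, Xs i)} (hU : U ∈ 𝓝 0) :
    ∃ n, (tailSubmodule (Xs := Xs) n : Set (∀ i, Xs i)) ⊆ U := by
  rw [nhds_pi, Filter.mem_pi] at hU
  obtain ⟨I, hI, O, hO, hOU⟩ := hU
  obtain ⟨n, hn⟩ := hI.bddAbove
  refine ⟨n + 1, fun x hx => hOU fun i hi => ?_⟩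
  rw [mem_tailSubmodule.1 hx i (Nat.lt_succ_of_le (hn hi))]
  exact mem_of_mem_nhds (hO i)

theorem Seminorm.exists_tailSubmodule_eq_zero (q : Seminorm ℝ (∀ i, Xs i)) (hq : Continuous q) :
    ∃ n, ∀ z ∈ tailSubmodule n, q z = 0 := by
  obtain ⟨n, hn⟩ := exists_tailSubmodule_subset (q.ball_mem_nhds hq one_pos)
  exact ⟨n, fun z hz => q.eq_zero_of_coe_subset_ball hn hz⟩

end Tails

section GlidingHump

variable {Xs : ℕ → Type*} [∀ i, AddCommGroup (Xs i)] [∀ i, Module ℝ (Xs i)]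

theorem exists_gliding_hump {ι : Type*} (q : ι → Seminorm ℝ (∀ i, Xs i)) (J : ℕ → Set ι)
    (hJ : ∀ n, (J n).Finite) (hne : ∀ n, ∀ j ∈ J n, ∃ z ∈ tailSubmodule n, q j z ≠ 0)
    (hzero : ∀ n, ∀ j ∈ J n, ∀ z ∈ tailSubmodule (n + 1), q j z = 0) (M : ℕ → ℝ) :
    ∃ x, ∀ n, ∀ j ∈ J n, M n ≤ q j x := by
  choose g hgS hg using fun n v =>
    Seminorm.exists_forall_le_map_add (tailSubmodule n) q (hJ n) (hne n) v (M n)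
  let H : ℕ → ∀ i, Xs i := fun n => Nat.rec 0 (fun m h => h + g m h) n
  have hH : ∀ n, H (n + 1) = H n + g n (H n) := fun _ => rfl
  obtain ⟨x, hx⟩ := exists_sub_mem_tailSubmodule H fun n => by
    simpa only [hH, add_sub_cancel_left] using hgS n (H n)
  refine ⟨x, fun n j hj => ?_⟩
  calc M n ≤ q j (H (n + 1)) := hH n ▸ hg n (H n) j hj
    _ = q j x := by
      rw [← (q j).map_add_eq_left_of_eq_zero _ (hzero n j hj _ (hx (n + 1))),
        add_sub_cancel]

end GlidingHump

theorem FStat.inter_of_sdiff_finite {F : Filter ℕ} (hfree : F ≤ cofinite) {A B : Set ℕ}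
    (hB : FStat F B) (hBA : (B \ A).Finite) : FStat F (B ∩ A) := fun hBA' =>
  hB <| mem_of_superset (inter_mem hBA' (hfree hBA.compl_mem_cofinite)) fun _ ⟨h₁, h₂⟩ hjB =>
    h₂ ⟨hjB, fun hjA => h₁ ⟨hjB, hjA⟩⟩

theorem FStat.inter_nonempty {F : Filter ℕ} {A S : Set ℕ} (hA : FStat F A) (hS : S ∈ F) :
    (A ∩ S).Nonempty := by
  by_contra h
  exact hA (mem_of_superset hS fun j hjS hjA => h ⟨j, hjA, hjS⟩)

theorem Antitone.exists_mem_sdiff_succ {α : Type*} {C : ℕ → Set α} (hC : Antitone C) {a : α}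
    {N : ℕ} (haN : a ∈ C N) (ha : ∃ m, a ∉ C m) : ∃ n, N ≤ n ∧ a ∈ C n \ C (n + 1) := by
  by_contra hno
  obtain ⟨m, ham⟩ := ha
  refine ham (hC (Nat.le_max_left m N) ?_)
  induction max m N, Nat.le_max_right m N using Nat.le_induction with
  | base => exact haN
  | succ k hk ih => exact by_contra fun hk' => hno ⟨k, hk, ih, hk'⟩

theorem exists_continuous_seminorm_ball_subset {Y : Type*} [AddCommGroup Y] [Module ℝ Y]
    [TopologicalSpace Y] [IsTopologicalAddGroup Y] [ContinuousSMul ℝ Y]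
    [LocallyConvexSpace ℝ Y] {V : Set Y} (hV : V ∈ 𝓝 0) :
    ∃ p : Seminorm ℝ Y, Continuous p ∧ p.ball 0 1 ⊆ V := by
  obtain ⟨W, ⟨hW₀, hWo, hWb, hWc⟩, hWV⟩ := (nhds_hasBasis_absConvex_open ℝ Y).mem_iff.1 hV
  have hW : W ∈ 𝓝 0 := hWo.mem_nhds hW₀
  exact ⟨gaugeSeminorm hWb hWc (absorbent_nhds_zero hW), continuous_gauge hWc hW,
    (gaugeSeminorm_ball_one hWo).trans_subset hWV⟩

section Product

variable {F : Filter ℕ} {Xs : ℕ → Type*} [∀ i, AddCommGroup (Xs i)] [∀ i, Module ℝ (Xs i)]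
  [∀ i, TopologicalSpace (Xs i)] {Y : Type*} [AddCommGroup Y] [Module ℝ Y] [TopologicalSpace Y]

theorem FPointwiseBounded.exists_tailSubmodule_eventually_eq_zero (hfree : F ≤ cofinite)
    (hP : PPlus F) {T : ℕ → (∀ i, Xs i) →L[ℝ] Y} (hT : FPointwiseBounded F T)
    (p : Seminorm ℝ Y) (hp : Continuous p) :
    ∃ n, ∀ᶠ j in F, ∀ z ∈ tailSubmodule n, p (T j z) = 0 := by
  by_contra! hno
  let q : ℕ → Seminorm ℝ (∀ i, Xs i) := fun j => p.comp (T j : (∀ i, Xs i) →ₗ[ℝ] Y)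
  let C : ℕ → Set ℕ := fun n => {j | ∃ z ∈ tailSubmodule n, q j z ≠ 0}
  -- `∃ᶠ j in F, P j` unfolds to `{j | ¬ P j} ∉ F`
  have hCstat : ∀ n, FStat F (C n) := hno
  have hCanti : Antitone C := fun m n hmn j ⟨z, hz, hqz⟩ => ⟨z, tailSubmodule_antitone hmn hz, hqz⟩
  have hleave : ∀ j, ∃ n, j ∉ C n := fun j => by
    obtain ⟨n, hn⟩ := (q j).exists_tailSubmodule_eq_zero (hp.comp (T j).continuous)
    exact ⟨n, fun ⟨z, hz, hqz⟩ => hqz (hn z hz)⟩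
  obtain ⟨B, hB, hBC⟩ := hP C hCstat hCanti
  obtain ⟨x, hx⟩ := exists_gliding_hump q (fun n => B ∩ (C n \ C (n + 1)))
    (fun n => (hBC (n + 1)).subset fun j hj => ⟨hj.1, hj.2.2⟩)
    (fun n j hj => hj.2.1)
    (fun n j hj z hz => by_contra fun hqz => hj.2.2 ⟨z, hz, hqz⟩) (fun n => n)
  obtain ⟨t, ht, hev⟩ := hT x (p.ball 0 1) (p.ball_mem_nhds hp one_pos)
  obtain ⟨N, hN⟩ := exists_nat_gt t⁻¹
  obtain ⟨j, ⟨hjB, hjC⟩, hjt⟩ := ((hB.inter_of_sdiff_finite hfree (hBC N)).inter_nonempty hev)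
  obtain ⟨n, hNn, hjn⟩ := hCanti.exists_mem_sdiff_succ hjC (hleave j)
  have hsmall : t * p (T j x) < 1 := by
    simpa [Seminorm.mem_ball_zero, map_smul_eq_mul, abs_of_pos ht] using hjt
  have hlarge : (n : ℝ) ≤ p (T j x) := hx n j ⟨hjB, hjn⟩
  have hNn' : t⁻¹ < n := hN.trans_le (Nat.cast_le.2 hNn)
  rw [inv_lt_iff_one_lt_mul₀ ht] at hNn'
  nlinarith

variable [IsTopologicalAddGroup Y] [ContinuousSMul ℝ Y] [LocallyConvexSpace ℝ Y]

theorem FPointwiseBounded.fEquicontinuous_pi (hfree : F ≤ cofinite) (hP : PPlus F)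
    {T : ℕ → (∀ i, Xs i) →L[ℝ] Y} (hT : FPointwiseBounded F T)
    (hsingle : ∀ i, FEquicontinuous F fun j => (T j).comp (.single ℝ Xs i)) :
    FEquicontinuous F T := by
  intro V hV
  obtain ⟨V₁, hV₁, hV₁V⟩ := exists_nhds_zero_half hV
  obtain ⟨p, hp, hpV₁⟩ := exists_continuous_seminorm_ball_subset hV₁
  obtain ⟨n, hn⟩ := hT.exists_tailSubmodule_eventually_eq_zero hfree hP p hp
  have hheads : FEquicontinuous F
      (∑ i ∈ Finset.range n, fun j => ((T j).comp (.single ℝ Xs i)).comp (.proj i)) :=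
    .finsetSum _ fun i _ => (hsingle i).comp _
  obtain ⟨U, hU, hUV₁⟩ := hheads V₁ hV₁
  refine ⟨U, hU, (hn.and hUV₁).mono fun j ⟨hj₀, hjU⟩ x hx => ?_⟩
  have hx_head : T j (∑ i ∈ Finset.range n, Pi.single i (x i)) ∈ V₁ := by
    simpa [map_sum] using hjU hx
  have hx_tail : T j (x - ∑ i ∈ Finset.range n, Pi.single i (x i)) ∈ V₁ := hpV₁ <| by
    rw [Seminorm.mem_ball_zero, hj₀ _ (sub_sum_single_mem_tailSubmodule x n)]
    exact one_pos
  simpa only [← map_add, add_sub_cancel] using hV₁V _ hx_head _ hx_tail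

end Product

theorem stmt_19_general (F : Filter ℕ) (hfree : F ≤ Filter.cofinite)
    (hP : PPlus F)
    (Xs : ℕ → Type v)
    [∀ i, AddCommGroup (Xs i)] [∀ i, Module ℝ (Xs i)]
    [∀ i, UniformSpace (Xs i)] :
    UBPFor.{u} F (∀ i, Xs i) ↔ ∀ i, UBPFor.{u} F (Xs i) := by
  refine ⟨fun hX i Y _ _ _ _ _ _ T hT => ?_, fun h Y _ _ _ _ _ _ T hT => ?_⟩
  · have h := FEquicontinuous.comp (hX Y _ (FPointwiseBounded.comp hT (.proj i)))
      (.single ℝ Xs i)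
    have hT_eq : (fun j => ((T j).comp (.proj i)).comp (.single ℝ Xs i)) = T := by ext; simp
    rwa [hT_eq] at h
  · exact FPointwiseBounded.fEquicontinuous_pi hfree hP hT fun i =>
      h i Y _ (FPointwiseBounded.comp hT _)

theorem stmt_19 (F : Filter ℕ) (hfree : F ≤ Filter.cofinite) [F.NeBot]
    (hP : PPlus F)
    (Xs : ℕ → Type v)
    [∀ i, AddCommGroup (Xs i)] [∀ i, Module ℝ (Xs i)]
    [∀ i, UniformSpace (Xs i)] [∀ i, IsUniformAddGroup (Xs i)]
    [∀ i, ContinuousSMul ℝ (Xs i)] [∀ i, LocallyConvexSpace ℝ (Xs i)]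
    [∀ i, CompleteSpace (Xs i)] [∀ i, TopologicalSpace.MetrizableSpace (Xs i)] :
    UBPFor.{u} F (∀ i, Xs i) ↔ ∀ i, UBPFor.{u} F (Xs i) :=
  stmt_19_general F hfree hP Xs
end
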